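/- arXiv:1101.1717 — 7 statements merged into one kernel-verified Lean document; each statement's English description precedes it below -/
import Mathlib

section
/- Let S be a concave entropy family depending only on the nonzero spectrum. Suppose S satisfies pure-state Holevo data processing: for every quantum channel 𝓔 given by Kraus operators, every k, all probability weights p_j and all unit vectors ψ_j ∈ ℂ^n (j ∈ Fin k), one has S(∑_j p_j 𝓔(ψ_jψ_jᴴ)) − ∑_j p_j S(𝓔(ψ_jψ_jᴴ)) ≤ S(∑_j p_j ψ_jψ_jᴴ) − ∑_j p_j S(ψ_jψ_jᴴ). Then for every tripartite pure density matrix ρ = ψψᴴ (ψ a unit vector in ℂ^m⊗ℂ^n⊗ℂ^p, indexed by Fin m × (Fin n × Fin p)) and every rank-1 POVM N = {u_j u_jᴴ} on ℂ^m, χ(N, b) ≤ χ(N, bc), where χ(N, bc) = S(ρ_{bc}) − ∑_{j : p_j ≠ 0} p_j S(ρ_{bc|j}) and χ(N, b) = S(ρ_b) − ∑_{j : p_j ≠ 0} p_j S(ρ_{b|j}), with p_j = Tr((N_j ⊗ I) ρ), ρ_{bc|j} = (1/p_j)·Tr_a((N_j ⊗ I) ρ), and ρ_{b|j} = Tr_c(ρ_{bc|j}).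 -/
open scoped Kronecker
open Finset Matrix
open scoped ComplexOrder

noncomputable section

/-- A density matrix: positive semidefinite with unit trace. -/
def IsDensity {d : Type} [Fintype d] [DecidableEq d] (ρ : Matrix d d ℂ) : Prop :=
  ρ.PosSemidef ∧ ρ.trace = 1

/-- An entropy family: a real number assigned to every square complex matrix of
every finite dimension. -/
def EntropyFamily : Type 1 :=
  ∀ (d : Type) [Fintype d] [DecidableEq d], Matrix d d ℂ → ℝ

/-- Concavity of an entropy family. -/
def EntropyFamily.Concave (S : EntropyFamily) : Prop :=
  ∀ (d : Type) [Fintype d] [DecidableEq d] (k : ℕ) (p : Fin k → ℝ)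
    (ρ : Fin k → Matrix d d ℂ),
    (∀ j, 0 ≤ p j) → ∑ j, p j = 1 → (∀ j, IsDensity (ρ j)) →
    ∑ j, p j * S d (ρ j) ≤ S d (∑ j, (p j : ℂ) • ρ j)

/-- The entropy family depends only on the nonzero spectrum: `S (A Aᴴ) = S (Aᴴ A)`. -/
def EntropyFamily.SpectrumDep (S : EntropyFamily) : Prop :=
  ∀ (d e : Type) [Fintype d] [DecidableEq d] [Fintype e] [DecidableEq e]
    (A : Matrix d e ℂ), S d (A * Aᴴ) = S e (Aᴴ * A)

/-- Partial trace over the first tensor factor. -/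
def trA {da db : Type} [Fintype da] (ρ : Matrix (da × db) (da × db) ℂ) :
    Matrix db db ℂ :=
  Matrix.of fun j j' => ∑ i, ρ (i, j) (i, j')

/-- Partial trace over the second tensor factor. -/
def trB {da db : Type} [Fintype db] (ρ : Matrix (da × db) (da × db) ℂ) :
    Matrix da da ℂ :=
  Matrix.of fun i i' => ∑ j, ρ (i, j) (i', j)

/-- A POVM: a finite family of positive semidefinite matrices summing to `1`. -/
def IsPOVM {d : Type} [Fintype d] [DecidableEq d] {k : ℕ}
    (P : Fin k → Matrix d d ℂ) : Prop :=
  (∀ j, (P j).PosSemidef) ∧ ∑ j, P j = 1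

/-- Probability of POVM outcome `P` on the first factor: `Tr((P ⊗ I) ρ)`. -/
def prob {da db : Type} [Fintype da] [Fintype db] [DecidableEq da] [DecidableEq db]
    (P : Matrix da da ℂ) (ρ : Matrix (da × db) (da × db) ℂ) : ℝ :=
  (((P ⊗ₖ (1 : Matrix db db ℂ)) * ρ).trace).re

/-- Conditional state on the second factor given POVM outcome `P`. -/
def condB {da db : Type} [Fintype da] [Fintype db] [DecidableEq da] [DecidableEq db]
    (P : Matrix da da ℂ) (ρ : Matrix (da × db) (da × db) ℂ) : Matrix db db ℂ :=
  (((prob P ρ)⁻¹ : ℝ) : ℂ) • trA ((P ⊗ₖ (1 : Matrix db db ℂ)) * ρ)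

/-- The Holevo quantity `χ(P, b)`. -/
def holevoB (S : EntropyFamily) {da db : Type} [Fintype da] [DecidableEq da]
    [Fintype db] [DecidableEq db] {k : ℕ} (P : Fin k → Matrix da da ℂ)
    (ρ : Matrix (da × db) (da × db) ℂ) : ℝ :=
  S db (trA ρ) -
    ∑ j ∈ univ.filter (fun j => prob (P j) ρ ≠ 0),
      prob (P j) ρ * S db (condB (P j) ρ)

/-- Eigenvalues of a Hermitian matrix (junk value `0` if not Hermitian). -/
def eigs {d : Type} [Fintype d] [DecidableEq d] (X : Matrix d d ℂ) : d → ℝ :=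
  if h : X.IsHermitian then h.eigenvalues else 0

/-- von Neumann entropy `S(ρ) = ∑ᵢ (−λᵢ log λᵢ)`. -/
def vN {d : Type} [Fintype d] [DecidableEq d] (ρ : Matrix d d ℂ) : ℝ :=
  ∑ i, Real.negMulLog (eigs ρ i)

/-- von Neumann entropy as an entropy family. -/
def vNF : EntropyFamily := fun d _ _ ρ => vN ρ

/-- Quadratic entropy `S_Q(ρ) = 1 − Re Tr(ρ²)`. -/
def SQ {d : Type} [Fintype d] (ρ : Matrix d d ℂ) : ℝ := 1 - ((ρ * ρ).trace).re

/-- Quadratic entropy as an entropy family. -/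
def SQF : EntropyFamily := fun d _ _ ρ => SQ ρ

/-- The outer product `ψ ψᴴ`. -/
def outer {d : Type} (ψ : d → ℂ) : Matrix d d ℂ := Matrix.vecMulVec ψ (star ψ)

/-- A unit vector. -/
def UnitVec {d : Type} [Fintype d] (ψ : d → ℂ) : Prop := ∑ i, ‖ψ i‖ ^ 2 = 1

/-- Kraus operators of a quantum channel: `∑ᵢ Kᵢᴴ Kᵢ = 1`. -/
def IsKraus {n r t : ℕ} (K : Fin t → Matrix (Fin r) (Fin n) ℂ) : Prop :=
  ∑ i, (K i)ᴴ * K i = 1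

/-- Action of the quantum channel with Kraus operators `K`. -/
def channel {n r t : ℕ} (K : Fin t → Matrix (Fin r) (Fin n) ℂ)
    (ρ : Matrix (Fin n) (Fin n) ℂ) : Matrix (Fin r) (Fin r) ℂ :=
  ∑ i, K i * ρ * (K i)ᴴ

/-- Conditional joint state after a POVM element with square root `Q` and
outcome probability `p`: `(1/p) (Q ⊗ I) ρ (Q ⊗ I)`. -/
def condJoint {da db : Type} [Fintype da] [Fintype db] [DecidableEq da]
    [DecidableEq db] (Q : Matrix da da ℂ) (p : ℝ)
    (ρ : Matrix (da × db) (da × db) ℂ) : Matrix (da × db) (da × db) ℂ :=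
  ((p⁻¹ : ℝ) : ℂ) • ((Q ⊗ₖ (1 : Matrix db db ℂ)) * ρ * (Q ⊗ₖ (1 : Matrix db db ℂ)))

/-- Tsallis entropy with parameter `q`. -/
def tsallis (q : ℝ) {d : Type} [Fintype d] [DecidableEq d]
    (ρ : Matrix d d ℂ) : ℝ :=
  ((∑ i, eigs ρ i ^ q) - 1) / (1 - q)

/-- Rényi entropy with parameter `q`. -/
def renyi (q : ℝ) {d : Type} [Fintype d] [DecidableEq d]
    (ρ : Matrix d d ℂ) : ℝ :=
  (1 / (1 - q)) * Real.log (∑ i, eigs ρ i ^ q)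


/-- Auxiliary: `S` depending only on the nonzero spectrum is invariant under
relabelling the index type of a Gram matrix. -/
lemma spec_congr (S : EntropyFamily) (hspec : S.SpectrumDep)
    {d d' e : Type} [Fintype d] [DecidableEq d]
    [Fintype d'] [DecidableEq d'] [Fintype e] [DecidableEq e]
    (f : d' ≃ d) (A : Matrix e d ℂ) :
    S d' ((A.submatrix id ⇑f)ᴴ * (A.submatrix id ⇑f)) = S d (Aᴴ * A) := by
  have h3 : (A.submatrix id ⇑f) * (A.submatrix id ⇑f)ᴴ = A * Aᴴ := by
    ext i i'
    simp only [Matrix.mul_apply, Matrix.conjTranspose_apply, Matrix.submatrix_apply, id_eq]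
    exact Fintype.sum_equiv f _ _ fun x => rfl
  rw [← hspec e d' (A.submatrix id ⇑f), h3, hspec e d A]

/-- pure-state Holevo data processing implies
`χ(N, b) ≤ χ(N, bc)` for tripartite pure states and rank-1 POVMs. -/
theorem data_processing_implies_chi_monotone
    (S : EntropyFamily) (hconc : S.Concave) (hspec : S.SpectrumDep)
    (hDP : ∀ (n r t : ℕ) (K : Fin t → Matrix (Fin r) (Fin n) ℂ), IsKraus K →
      ∀ (k : ℕ) (p : Fin k → ℝ) (ψ : Fin k → Fin n → ℂ),
        (∀ j, 0 ≤ p j) → ∑ j, p j = 1 → (∀ j, UnitVec (ψ j)) →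
        S (Fin r) (∑ j, (p j : ℂ) • channel K (outer (ψ j))) -
            ∑ j, p j * S (Fin r) (channel K (outer (ψ j))) ≤
          S (Fin n) (∑ j, (p j : ℂ) • outer (ψ j)) -
            ∑ j, p j * S (Fin n) (outer (ψ j)))
    (m n p k : ℕ) (ψ : Fin m × (Fin n × Fin p) → ℂ) (hψ : UnitVec ψ)
    (u : Fin k → Fin m → ℂ) (hu : ∑ j, outer (u j) = 1) :
    S (Fin n) (trB (trA (outer ψ))) -
        ∑ j ∈ univ.filter (fun j => prob (outer (u j)) (outer ψ) ≠ 0),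
          prob (outer (u j)) (outer ψ) *
            S (Fin n) (trB (condB (outer (u j)) (outer ψ))) ≤
      S (Fin n × Fin p) (trA (outer ψ)) -
        ∑ j ∈ univ.filter (fun j => prob (outer (u j)) (outer ψ) ≠ 0),
          prob (outer (u j)) (outer ψ) *
            S (Fin n × Fin p) (condB (outer (u j)) (outer ψ)) := by
  classical
  -- basic nonemptiness
  have hne : Nonempty (Fin m × (Fin n × Fin p)) := by
    by_contra h
    rw [not_nonempty_iff] at h
    unfold UnitVec at hψ
    rw [Finset.univ_eq_empty, Finset.sum_empty] at hψ
    norm_num at hψ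
  obtain ⟨⟨a0, b0, c0⟩⟩ := hne
  set e : Fin n × Fin p ≃ Fin (n * p) := finProdFinEquiv with hedef
  set pr : Fin k → ℝ := fun j => prob (outer (u j)) (outer ψ) with hprdef
  set φ : Fin k → (Fin n × Fin p) → ℂ := fun j β => ∑ α, star (u j α) * ψ (α, β) with hφdef
  have hφdef' : ∀ j β, φ j β = ∑ α, star (u j α) * ψ (α, β) := fun j β => rfl
  have hstarφ : ∀ j β, star (φ j β) = ∑ α, u j α * star (ψ (α, β)) := by
    intro j β
    rw [hφdef' j β, star_sum]
    exact Finset.sum_congr rfl fun α _ => by rw [star_mul', star_star]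
  -- entrywise formula for the measured state
  have hM : ∀ (j : Fin k) (α : Fin m) (β : Fin n × Fin p) (q' : Fin m × (Fin n × Fin p)),
      ((outer (u j) ⊗ₖ (1 : Matrix (Fin n × Fin p) (Fin n × Fin p) ℂ)) * outer ψ) (α, β) q'
        = u j α * φ j β * star (ψ q') := by
    intro j α β q'
    rw [Matrix.mul_apply, Fintype.sum_prod_type]
    simp only [Matrix.kroneckerMap_apply, outer, Matrix.vecMulVec_apply, Pi.star_apply,
      Matrix.one_apply, mul_ite, ite_mul, mul_one, mul_zero, zero_mul, one_mul,
      Finset.sum_ite_eq, Finset.mem_univ, if_true]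
    rw [hφdef' j β, Finset.mul_sum, Finset.sum_mul]
    exact Finset.sum_congr rfl fun a _ => by ring
  -- partial trace of the measured state is a pure (unnormalised) state
  have htrAeq : ∀ j, trA ((outer (u j) ⊗ₖ (1 : Matrix (Fin n × Fin p) (Fin n × Fin p) ℂ)) * outer ψ)
      = Matrix.of (fun β β' => φ j β * star (φ j β')) := by
    intro j
    ext β β'
    show ∑ α, ((outer (u j) ⊗ₖ (1 : Matrix (Fin n × Fin p) (Fin n × Fin p) ℂ)) * outer ψ) (α, β) (α, β')
        = φ j β * star (φ j β')
    calc ∑ α, ((outer (u j) ⊗ₖ (1 : Matrix (Fin n × Fin p) (Fin n × Fin p) ℂ)) * outer ψ) (α, β) (α, β')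
        = ∑ α, u j α * φ j β * star (ψ (α, β')) :=
          Finset.sum_congr rfl fun α _ => hM j α β (α, β')
      _ = φ j β * star (φ j β') := by
          rw [hstarφ j β', Finset.mul_sum]
          exact Finset.sum_congr rfl fun α _ => by ring
  -- trace formula
  have htr : ∀ j, (((outer (u j) ⊗ₖ (1 : Matrix (Fin n × Fin p) (Fin n × Fin p) ℂ)) * outer ψ)).trace
      = ∑ β, φ j β * star (φ j β) := by
    intro j
    rw [Matrix.trace]
    calc ∑ q, ((outer (u j) ⊗ₖ (1 : Matrix (Fin n × Fin p) (Fin n × Fin p) ℂ)) * outer ψ).diag q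
        = ∑ α, ∑ β, u j α * φ j β * star (ψ (α, β)) := by
          rw [Fintype.sum_prod_type]
          exact Finset.sum_congr rfl fun α _ => Finset.sum_congr rfl fun β _ => hM j α β (α, β)
      _ = ∑ β, φ j β * star (φ j β) := by
          rw [Finset.sum_comm]
          refine Finset.sum_congr rfl fun β _ => ?_
          rw [hstarφ j β, Finset.mul_sum]
          exact Finset.sum_congr rfl fun α _ => by ring
  have hprval : ∀ j, pr j = ∑ β, ‖φ j β‖ ^ 2 := by
    intro j
    show (((outer (u j) ⊗ₖ (1 : Matrix (Fin n × Fin p) (Fin n × Fin p) ℂ)) * outer ψ)).trace.re = _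
    rw [htr j, Complex.re_sum]
    refine Finset.sum_congr rfl fun β _ => ?_
    rw [show star (φ j β) = (starRingEnd ℂ) (φ j β) from rfl, Complex.mul_conj]
    rw [Complex.ofReal_re, Complex.normSq_eq_norm_sq]
  have hpr0 : ∀ j, 0 ≤ pr j := fun j => by rw [hprval j]; positivity
  have hφzero : ∀ j, pr j = 0 → ∀ β, φ j β = 0 := by
    intro j h β
    have h2 := (Finset.sum_eq_zero_iff_of_nonneg (fun β _ => by positivity)).mp
      ((hprval j).symm.trans h) β (Finset.mem_univ β)
    simpa using h2
  -- total probability is 1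
  have hMsum : ∑ j, ((outer (u j)) ⊗ₖ (1 : Matrix (Fin n × Fin p) (Fin n × Fin p) ℂ)) * outer ψ
      = outer ψ := by
    rw [← Finset.sum_mul]
    have h1 : (∑ j, (outer (u j) ⊗ₖ (1 : Matrix (Fin n × Fin p) (Fin n × Fin p) ℂ)))
        = (∑ j, outer (u j)) ⊗ₖ (1 : Matrix (Fin n × Fin p) (Fin n × Fin p) ℂ) := by
      ext ⟨a, b⟩ ⟨a', b'⟩
      simp [Matrix.sum_apply, Matrix.kroneckerMap_apply, Finset.sum_mul]
    rw [h1, hu, Matrix.one_kronecker_one, Matrix.one_mul]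
  have hprsum : ∑ j, pr j = 1 := by
    have h1 : ∑ j, pr j
        = (∑ j, (((outer (u j) ⊗ₖ (1 : Matrix (Fin n × Fin p) (Fin n × Fin p) ℂ)) * outer ψ)).trace).re := by
      rw [Complex.re_sum]; rfl
    rw [h1, ← Matrix.trace_sum, hMsum]
    rw [Matrix.trace, Complex.re_sum, ← hψ]
    refine Finset.sum_congr rfl fun q _ => ?_
    show (ψ q * star (ψ q)).re = _
    rw [show star (ψ q) = (starRingEnd ℂ) (ψ q) from rfl, Complex.mul_conj]
    rw [Complex.ofReal_re, Complex.normSq_eq_norm_sq]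
  -- conditional state formula
  have hcondOf : ∀ j, condB (outer (u j)) (outer ψ)
      = ((((pr j)⁻¹ : ℝ)) : ℂ) • (Matrix.of (fun β β' => φ j β * star (φ j β')) :
          Matrix (Fin n × Fin p) (Fin n × Fin p) ℂ) := by
    intro j
    unfold condB
    rw [htrAeq j]
  -- Kraus operators for partial trace over C
  set K : Fin p → Matrix (Fin n) (Fin (n * p)) ℂ :=
    fun c => Matrix.of fun b x => if e (b, c) = x then 1 else 0 with hKdef
  have hK : IsKraus K := by
    unfold IsKraus
    ext x x'
    simp only [Matrix.sum_apply, Matrix.mul_apply, Matrix.conjTranspose_apply, hKdef,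
      Matrix.of_apply, apply_ite (star : ℂ → ℂ), star_one, star_zero]
    have hrhs : (1 : Matrix (Fin (n * p)) (Fin (n * p)) ℂ) x x'
        = ∑ z : Fin (n * p), (if z = x then 1 else 0) * (if z = x' then 1 else 0) := by
      simp [Matrix.one_apply, ite_mul, zero_mul, Finset.sum_ite_eq, eq_comm]
    rw [hrhs]
    have key : ∀ g : Fin (n * p) → ℂ, ∑ c : Fin p, ∑ b : Fin n, g (e (b, c)) = ∑ z, g z := by
      intro g
      rw [← Equiv.sum_comp ((Equiv.prodComm (Fin p) (Fin n)).trans e) g,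
        Fintype.sum_prod_type]
      rfl
    exact key (fun z => (if z = x then 1 else 0) * (if z = x' then 1 else 0))
  have hchan : ∀ M : Matrix (Fin n × Fin p) (Fin n × Fin p) ℂ,
      channel K (M.submatrix ⇑e.symm ⇑e.symm) = trB M := by
    intro M
    unfold channel trB
    ext b b'
    simp only [Matrix.sum_apply, Matrix.mul_apply, hKdef, Matrix.of_apply,
      Matrix.conjTranspose_apply, Matrix.submatrix_apply,
      apply_ite (star : ℂ → ℂ), star_one, star_zero, ite_mul, mul_ite, mul_one, mul_zero,
      zero_mul, one_mul, Finset.sum_ite_eq, Finset.mem_univ, if_true,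
      Equiv.symm_apply_apply]
  -- the ensemble vectors
  set x0 : Fin (n * p) := e (b0, c0) with hx0def
  set ψ' : Fin k → Fin (n * p) → ℂ := fun j x =>
    if pr j = 0 then (if x = x0 then 1 else 0)
    else ((((Real.sqrt (pr j))⁻¹ : ℝ)) : ℂ) * φ j (e.symm x) with hψ'def
  have hc2 : ∀ j, ((((Real.sqrt (pr j))⁻¹ : ℝ)) : ℂ) * ((((Real.sqrt (pr j))⁻¹ : ℝ)) : ℂ)
      = (((pr j)⁻¹ : ℝ) : ℂ) := by
    intro j
    rw [← Complex.ofReal_mul]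
    congr 1
    rw [← mul_inv, Real.mul_self_sqrt (hpr0 j)]
  have hunit : ∀ j, UnitVec (ψ' j) := by
    intro j
    unfold UnitVec
    by_cases h : pr j = 0
    · have h1 : ∀ x : Fin (n * p), ‖(if x = x0 then (1 : ℂ) else 0)‖ ^ 2
          = if x = x0 then (1 : ℝ) else 0 := by
        intro x; split <;> simp
      simp only [hψ'def, if_pos h, h1]
      simp [Finset.sum_ite_eq']
    · simp only [hψ'def, if_neg h]
      have hsum : ∑ x : Fin (n * p), ‖φ j (e.symm x)‖ ^ 2 = pr j := by
        rw [hprval j]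
        exact Fintype.sum_equiv e.symm _ _ fun x => rfl
      calc ∑ x : Fin (n * p), ‖((((Real.sqrt (pr j))⁻¹ : ℝ)) : ℂ) * φ j (e.symm x)‖ ^ 2
          = ∑ x : Fin (n * p), (pr j)⁻¹ * ‖φ j (e.symm x)‖ ^ 2 := by
            refine Finset.sum_congr rfl fun x _ => ?_
            rw [norm_mul, mul_pow, Complex.norm_real, Real.norm_eq_abs, sq_abs, inv_pow,
              Real.sq_sqrt (hpr0 j)]
        _ = (pr j)⁻¹ * pr j := by rw [← Finset.mul_sum, hsum]
        _ = 1 := inv_mul_cancel₀ h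
  have houter : ∀ j, pr j ≠ 0 →
      outer (ψ' j) = (condB (outer (u j)) (outer ψ)).submatrix ⇑e.symm ⇑e.symm := by
    intro j h
    ext x x'
    rw [hcondOf j]
    show ψ' j x * star (ψ' j x') = _
    simp only [Matrix.submatrix_apply, Matrix.smul_apply, Matrix.of_apply, smul_eq_mul,
      hψ'def, if_neg h]
    rw [star_mul', show star (((((Real.sqrt (pr j))⁻¹ : ℝ)) : ℂ)) = ((((Real.sqrt (pr j))⁻¹ : ℝ)) : ℂ)
      from Complex.conj_ofReal _]
    linear_combination (φ j (e.symm x) * star (φ j (e.symm x'))) * hc2 j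
  -- mixture identity
  have h1mix : ∀ j, ((pr j : ℝ) : ℂ) • outer (ψ' j)
      = ((Matrix.of (fun β β' => φ j β * star (φ j β')) :
          Matrix (Fin n × Fin p) (Fin n × Fin p) ℂ)).submatrix ⇑e.symm ⇑e.symm := by
    intro j
    by_cases h : pr j = 0
    · ext x x'
      simp [h, hφzero j h, Matrix.smul_apply]
    · rw [houter j h, hcondOf j]
      ext x x'
      simp only [Matrix.smul_apply, Matrix.submatrix_apply, smul_eq_mul]
      rw [← mul_assoc, ← Complex.ofReal_mul, mul_inv_cancel₀ h, Complex.ofReal_one, one_mul]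
  have htrAadd : ∀ (Ms : Fin k → Matrix (Fin m × (Fin n × Fin p)) (Fin m × (Fin n × Fin p)) ℂ),
      trA (∑ j, Ms j) = ∑ j, trA (Ms j) := by
    intro Ms
    ext β β'
    show ∑ α, (∑ j, Ms j) (α, β) (α, β') = _
    simp only [Matrix.sum_apply]
    exact Finset.sum_comm
  have hofsum : (∑ j, (Matrix.of (fun β β' => φ j β * star (φ j β')) :
        Matrix (Fin n × Fin p) (Fin n × Fin p) ℂ)) = trA (outer ψ) := by
    rw [Finset.sum_congr rfl fun j _ => (htrAeq j).symm, ← htrAadd, hMsum]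
  have hmix : ∑ j, ((pr j : ℝ) : ℂ) • outer (ψ' j)
      = (trA (outer ψ)).submatrix ⇑e.symm ⇑e.symm := by
    rw [Finset.sum_congr rfl fun j _ => h1mix j, ← hofsum]
    ext x x'
    simp [Matrix.sum_apply]
  -- channel linearity and the channel sum
  have hchlin : ∀ (c : ℂ) (M : Matrix (Fin (n * p)) (Fin (n * p)) ℂ),
      channel K (c • M) = c • channel K M := by
    intro c M
    unfold channel
    rw [Finset.smul_sum]
    exact Finset.sum_congr rfl fun i _ => by rw [Matrix.mul_smul, Matrix.smul_mul]
  have hchadd : ∀ (Ms : Fin k → Matrix (Fin (n * p)) (Fin (n * p)) ℂ),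
      channel K (∑ j, Ms j) = ∑ j, channel K (Ms j) := by
    intro Ms
    unfold channel
    have h2 : ∀ i : Fin p, K i * (∑ j, Ms j) * (K i)ᴴ = ∑ j, K i * Ms j * (K i)ᴴ := by
      intro i; rw [Matrix.mul_sum, Matrix.sum_mul]
    rw [Finset.sum_congr rfl fun i _ => h2 i]
    exact Finset.sum_comm
  have hchsum : ∑ j, ((pr j : ℝ) : ℂ) • channel K (outer (ψ' j)) = trB (trA (outer ψ)) := by
    rw [Finset.sum_congr rfl fun j _ => (hchlin ((pr j : ℝ) : ℂ) (outer (ψ' j))).symm,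
      ← hchadd, hmix, hchan]
  -- the spectrum-dependence identifications
  have hAAH : (Matrix.of (fun α β => star (ψ (α, β))) : Matrix (Fin m) (Fin n × Fin p) ℂ)ᴴ *
      (Matrix.of (fun α β => star (ψ (α, β))) : Matrix (Fin m) (Fin n × Fin p) ℂ)
      = trA (outer ψ) := by
    ext β β'
    show ∑ α, star (star (ψ (α, β))) * star (ψ (α, β')) = ∑ α, outer ψ (α, β) (α, β')
    exact Finset.sum_congr rfl fun α _ => by rw [star_star]; rfl
  have hAsub : ((Matrix.of (fun α β => star (ψ (α, β))) :
        Matrix (Fin m) (Fin n × Fin p) ℂ).submatrix id ⇑e.symm)ᴴ *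
      ((Matrix.of (fun α β => star (ψ (α, β))) :
        Matrix (Fin m) (Fin n × Fin p) ℂ).submatrix id ⇑e.symm)
      = (trA (outer ψ)).submatrix ⇑e.symm ⇑e.symm := by
    ext x x'
    show ∑ α, star (star (ψ (α, e.symm x))) * star (ψ (α, e.symm x'))
        = ∑ α, outer ψ (α, e.symm x) (α, e.symm x')
    exact Finset.sum_congr rfl fun α _ => by rw [star_star]; rfl
  have Sbc : S (Fin (n * p)) ((trA (outer ψ)).submatrix ⇑e.symm ⇑e.symm)
      = S (Fin n × Fin p) (trA (outer ψ)) := by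
    rw [← hAsub, ← hAAH]
    exact spec_congr S hspec e.symm _
  have Scond : ∀ j, pr j ≠ 0 → S (Fin (n * p)) (outer (ψ' j))
      = S (Fin n × Fin p) (condB (outer (u j)) (outer ψ)) := by
    intro j h
    set B : Matrix (Fin 1) (Fin n × Fin p) ℂ :=
      Matrix.of (fun _ β => ((((Real.sqrt (pr j))⁻¹ : ℝ)) : ℂ) * star (φ j β)) with hBdef
    have hB1 : Bᴴ * B = condB (outer (u j)) (outer ψ) := by
      ext β β'
      rw [hcondOf j]
      show ∑ i : Fin 1, star (B i β) * B i β' = _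
      rw [Fin.sum_univ_one]
      simp only [hBdef, Matrix.of_apply, Matrix.smul_apply, smul_eq_mul]
      rw [star_mul', star_star,
        show star (((((Real.sqrt (pr j))⁻¹ : ℝ)) : ℂ)) = ((((Real.sqrt (pr j))⁻¹ : ℝ)) : ℂ)
          from Complex.conj_ofReal _]
      linear_combination (φ j β * star (φ j β')) * hc2 j
    have hB2 : (B.submatrix id ⇑e.symm)ᴴ * (B.submatrix id ⇑e.symm) = outer (ψ' j) := by
      ext x x'
      show ∑ i : Fin 1, star (B i (e.symm x)) * B i (e.symm x') = ψ' j x * star (ψ' j x')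
      rw [Fin.sum_univ_one]
      simp only [hBdef, Matrix.of_apply, hψ'def, if_neg h, star_mul', star_star,
        Complex.conj_ofReal]
      all_goals ring
    rw [← hB1, ← hB2]
    exact spec_congr S hspec e.symm _
  have hchcond : ∀ j, pr j ≠ 0 →
      channel K (outer (ψ' j)) = trB (condB (outer (u j)) (outer ψ)) := by
    intro j h
    rw [houter j h, hchan]
  -- apply the data-processing hypothesis
  have H := hDP (n * p) n p K hK k pr ψ' hpr0 hprsum hunit
  rw [hchsum, hmix, Sbc] at H
  have e1 : ∑ j ∈ univ.filter (fun j => prob (outer (u j)) (outer ψ) ≠ 0),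
        prob (outer (u j)) (outer ψ) * S (Fin n) (trB (condB (outer (u j)) (outer ψ)))
      = ∑ j, pr j * S (Fin n) (channel K (outer (ψ' j))) := by
    rw [Finset.sum_subset (Finset.filter_subset _ _) (fun x _ hx => by
      have h0 : prob (outer (u x)) (outer ψ) = 0 := by
        by_contra hc
        exact hx (Finset.mem_filter.mpr ⟨Finset.mem_univ x, hc⟩)
      rw [h0, zero_mul])]
    refine Finset.sum_congr rfl fun j _ => ?_
    by_cases h : pr j = 0
    · simp only [show prob (outer (u j)) (outer ψ) = pr j from rfl, h, zero_mul]
    · rw [hchcond j h]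
  have e2 : ∑ j ∈ univ.filter (fun j => prob (outer (u j)) (outer ψ) ≠ 0),
        prob (outer (u j)) (outer ψ) * S (Fin n × Fin p) (condB (outer (u j)) (outer ψ))
      = ∑ j, pr j * S (Fin (n * p)) (outer (ψ' j)) := by
    rw [Finset.sum_subset (Finset.filter_subset _ _) (fun x _ hx => by
      have h0 : prob (outer (u x)) (outer ψ) = 0 := by
        by_contra hc
        exact hx (Finset.mem_filter.mpr ⟨Finset.mem_univ x, hc⟩)
      rw [h0, zero_mul])]
    refine Finset.sum_congr rfl fun j _ => ?_
    by_cases h : pr j = 0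
    · simp only [show prob (outer (u j)) (outer ψ) = pr j from rfl, h, zero_mul]
    · rw [Scond j h]
  rw [← e1, ← e2] at H
  exact H
end
end

section
/- Let S be a concave entropy family depending only on the nonzero spectrum. Suppose that for every bipartite density matrix ρ on ℂ^m⊗ℂ^n (all m, n) and every POVM {P_j} on ℂ^m, χ(P, b) ≤ S(ρ_a). Then S is firmly subadditive: for every bipartite density matrix ρ on ℂ^m⊗ℂ^n and every POVM {P_j} on ℂ^m, χ(P, b) ≤ S(ρ_a) + S(ρ_b) − S(ρ). -/
open scoped Kronecker
open Finset Matrix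
open scoped ComplexOrder

noncomputable section

/-! ### Auxiliary machinery for the proof of firm subadditivity -/

section FirmSubAux

section PSqrt
open scoped MatrixOrder

/-- Square root of a positive semidefinite matrix. -/
def psqrt {d : Type} [Fintype d] [DecidableEq d] (M : Matrix d d ℂ) : Matrix d d ℂ := CFC.sqrt M

lemma psqrt_psd {d : Type} [Fintype d] [DecidableEq d] (M : Matrix d d ℂ) :
    (psqrt M).PosSemidef := (CFC.sqrt_nonneg M).posSemidef

lemma psqrt_mul_self {d : Type} [Fintype d] [DecidableEq d] {M : Matrix d d ℂ}
    (hM : M.PosSemidef) : psqrt M * psqrt M = M := CFC.sqrt_mul_sqrt_self M hM.nonneg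

end PSqrt

lemma aux_sum_filter_mul {ι : Type} [Fintype ι] (f g : ι → ℝ) :
    ∑ t ∈ Finset.univ.filter (fun t => f t ≠ 0), f t * g t = ∑ t, f t * g t := by
  apply Finset.sum_filter_of_ne
  intro x _ hx h0
  exact hx (by simp [h0])

lemma aux_sqrt_mul (c : ℝ) (hc : 0 ≤ c) :
    ((Real.sqrt c : ℝ) : ℂ) * star ((Real.sqrt c : ℝ) : ℂ) = (c : ℂ) := by
  rw [Complex.star_def, Complex.conj_ofReal, ← Complex.ofReal_mul, Real.mul_self_sqrt hc]

lemma aux_smul_spec (S : EntropyFamily) (hspec : S.SpectrumDep)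
    {d e : Type} [Fintype d] [DecidableEq d] [Fintype e] [DecidableEq e]
    (A : Matrix d e ℂ) {c : ℝ} (hc : 0 ≤ c) :
    S d ((c : ℂ) • (A * Aᴴ)) = S e ((c : ℂ) • (Aᴴ * A)) := by
  have h := hspec d e (((Real.sqrt c : ℝ) : ℂ) • A)
  simp only [conjTranspose_smul, Matrix.smul_mul, Matrix.mul_smul, smul_smul] at h
  rwa [aux_sqrt_mul c hc, mul_comm (star _), aux_sqrt_mul c hc] at h

lemma aux_smul_psd {d e : Type} [Fintype d] [DecidableEq d] [Fintype e] [DecidableEq e]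
    (A : Matrix d e ℂ) {c : ℝ} (hc : 0 ≤ c) :
    ((c : ℂ) • (A * Aᴴ)).PosSemidef := by
  have h := Matrix.posSemidef_self_mul_conjTranspose (((Real.sqrt c : ℝ) : ℂ) • A)
  simp only [conjTranspose_smul, Matrix.smul_mul, Matrix.mul_smul, smul_smul] at h
  rwa [mul_comm, aux_sqrt_mul c hc] at h

lemma aux_smul_psd' {d : Type} [Fintype d] [DecidableEq d]
    {M : Matrix d d ℂ} (hM : M.PosSemidef) {c : ℝ} (hc : 0 ≤ c) :
    ((c : ℂ) • M).PosSemidef := by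
  have hMeq : M = psqrt M * (psqrt M)ᴴ := by
    rw [(psqrt_psd M).1, psqrt_mul_self hM]
  rw [hMeq]
  exact aux_smul_psd _ hc

lemma aux_S_transpose (S : EntropyFamily) (hspec : S.SpectrumDep)
    {d : Type} [Fintype d] [DecidableEq d] {M : Matrix d d ℂ} (hM : M.PosSemidef) :
    S d Mᵀ = S d M := by
  have hH : M.IsHermitian := hM.1
  set U : Matrix d d ℂ := (hH.eigenvectorUnitary : Matrix d d ℂ) with hU
  have hUU : Uᴴ * U = 1 := by
    simpa [Matrix.star_eq_conjTranspose] using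
      (Matrix.mem_unitaryGroup_iff'.mp (hH.eigenvectorUnitary).2)
  set D : Matrix d d ℂ := diagonal (fun i => ((Real.sqrt (hH.eigenvalues i) : ℝ) : ℂ)) with hD
  have hDH : Dᴴ = D := by
    ext x y
    by_cases hxy : x = y
    · subst hxy
      rw [conjTranspose_apply, hD]
      simp [diagonal_apply_eq, Complex.star_def, Complex.conj_ofReal]
    · rw [conjTranspose_apply, hD]
      simp [diagonal_apply_ne, hxy, Ne.symm hxy]
  have hDD : D * D = diagonal (RCLike.ofReal ∘ hH.eigenvalues) := by
    rw [hD, diagonal_mul_diagonal]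
    have : (fun i => ((Real.sqrt (hH.eigenvalues i) : ℝ) : ℂ) * ((Real.sqrt (hH.eigenvalues i) : ℝ) : ℂ))
        = (RCLike.ofReal ∘ hH.eigenvalues) := by
      funext i
      rw [← Complex.ofReal_mul, Real.mul_self_sqrt (hM.eigenvalues_nonneg i)]
      rfl
    rw [this]
  have hspec1 : M = (U * D) * (U * D)ᴴ := by
    rw [conjTranspose_mul, hDH, mul_assoc, ← mul_assoc D, hDD, ← mul_assoc]
    have := hH.spectral_theorem
    rw [Unitary.conjStarAlgAut_apply, Matrix.star_eq_conjTranspose] at this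
    exact this
  have hspec2 : (U * D)ᴴ * (U * D) = diagonal (RCLike.ofReal ∘ hH.eigenvalues) := by
    rw [conjTranspose_mul, hDH, mul_assoc, ← mul_assoc Uᴴ, hUU, one_mul, hDD]
  set V : Matrix d d ℂ := Uᴴᵀ with hV
  have hVH : Vᴴ = Uᵀ := by
    ext x y
    simp [hV, conjTranspose_apply, transpose_apply]
  have hVV : Vᴴ * V = 1 := by
    rw [hVH, hV, ← transpose_mul, ← transpose_one]
    congr 1
  have hspec1' : Mᵀ = (V * D) * (V * D)ᴴ := by
    rw [conjTranspose_mul, hDH, mul_assoc, ← mul_assoc D, hDD, ← mul_assoc, hVH]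
    have := congrArg Matrix.transpose hH.spectral_theorem
    rw [Unitary.conjStarAlgAut_apply, Matrix.star_eq_conjTranspose, transpose_mul, transpose_mul, diagonal_transpose] at this
    rw [this, hV, mul_assoc]
  have hspec2' : (V * D)ᴴ * (V * D) = diagonal (RCLike.ofReal ∘ hH.eigenvalues) := by
    rw [conjTranspose_mul, hDH, mul_assoc, ← mul_assoc Vᴴ, hVV, one_mul, hDD]
  calc S d Mᵀ = S d ((V * D) * (V * D)ᴴ) := by rw [← hspec1']
    _ = S d ((V * D)ᴴ * (V * D)) := hspec d d (V * D)
    _ = S d ((U * D)ᴴ * (U * D)) := by rw [hspec2, hspec2']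
    _ = S d ((U * D) * (U * D)ᴴ) := (hspec d d (U * D)).symm
    _ = S d M := by rw [← hspec1]

lemma aux_uniform_density {d : Type} [Fintype d] [DecidableEq d] [Nonempty d] :
    IsDensity ((((Fintype.card d : ℝ)⁻¹ : ℝ) : ℂ) • (1 : Matrix d d ℂ)) := by
  constructor
  · exact aux_smul_psd' (Matrix.PosSemidef.one) (by positivity)
  · rw [Matrix.trace_smul, Matrix.trace_one, smul_eq_mul]
    have hcd : ((Fintype.card d : ℂ)) = (((Fintype.card d : ℝ)) : ℂ) := by push_cast; ring
    rw [hcd, ← Complex.ofReal_mul,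
      inv_mul_cancel₀ (by exact_mod_cast (Fintype.card_ne_zero : Fintype.card d ≠ 0)),
      Complex.ofReal_one]

lemma aux_herm_apply {d : Type} [Fintype d] [DecidableEq d]
    {M : Matrix d d ℂ} (hM : M.IsHermitian) (a b : d) : star (M a b) = M b a := by
  conv_rhs => rw [← hM]
  rw [Matrix.conjTranspose_apply]

/-- The rank-one matrix `x xᴴ`. -/
def EMat {d : Type} (x : d → ℂ) : Matrix d d ℂ := Matrix.of fun i i' => x i * star (x i')

lemma EMat_posSemidef {d : Type} [Fintype d] [DecidableEq d] (x : d → ℂ) :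
    (EMat x).PosSemidef := by
  have : EMat x
      = (Matrix.of fun (_ : Unit) i => star (x i))ᴴ * (Matrix.of fun (_ : Unit) i => star (x i)) := by
    ext i i'
    simp [EMat, Matrix.mul_apply, Matrix.conjTranspose_apply]
  rw [this]
  exact Matrix.posSemidef_conjTranspose_mul_self _

lemma aux_trace_trA {da db : Type} [Fintype da] [Fintype db]
    (X : Matrix (da × db) (da × db) ℂ) : (trA X).trace = X.trace := by
  rw [Matrix.trace, Matrix.trace, Fintype.sum_prod_type]
  simp only [trA, Matrix.diag, Matrix.of_apply]
  exact Finset.sum_comm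

lemma aux_trace_trB {da db : Type} [Fintype da] [Fintype db]
    (X : Matrix (da × db) (da × db) ℂ) : (trB X).trace = X.trace := by
  rw [Matrix.trace, Matrix.trace, Fintype.sum_prod_type]
  simp only [trB, Matrix.diag, Matrix.of_apply]

lemma aux_trA_kron_mul {da db : Type} [Fintype da] [Fintype db] [DecidableEq da]
    [DecidableEq db] (Q : Matrix da da ℂ) (τ : Matrix (da × db) (da × db) ℂ) :
    trA ((Q ⊗ₖ (1 : Matrix db db ℂ)) * τ)
      = Matrix.of fun c c' => ∑ i, ∑ i', Q i i' * τ (i', c) (i, c') := by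
  ext c c'
  simp only [trA, Matrix.of_apply, Matrix.mul_apply, Fintype.sum_prod_type,
    Matrix.kroneckerMap_apply, Matrix.one_apply, mul_ite, mul_one, mul_zero, ite_mul, zero_mul]
  simp

lemma aux_trA_sum {da db ι : Type} [Fintype da] [Fintype ι]
    (f : ι → Matrix (da × db) (da × db) ℂ) :
    trA (∑ i, f i) = ∑ i, trA (f i) := by
  ext c c'
  simp only [trA, Matrix.of_apply, Matrix.sum_apply]
  exact Finset.sum_comm

lemma aux_kron_sum {da db ι : Type} [Fintype da] [Fintype db] [DecidableEq db] [Fintype ι]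
    (f : ι → Matrix da da ℂ) :
    ((∑ i, f i) ⊗ₖ (1 : Matrix db db ℂ)) = ∑ i, (f i ⊗ₖ (1 : Matrix db db ℂ)) := by
  ext p q
  simp only [Matrix.kroneckerMap_apply, Matrix.sum_apply, Finset.sum_mul]

lemma aux_prob_eq {da db : Type} [Fintype da] [Fintype db] [DecidableEq da] [DecidableEq db]
    (Q : Matrix da da ℂ) (τ : Matrix (da × db) (da × db) ℂ) :
    prob Q τ = ((Q * trB τ).trace).re := by
  rw [prob]
  congr 1
  rw [← aux_trace_trA ((Q ⊗ₖ (1 : Matrix db db ℂ)) * τ), aux_trA_kron_mul]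
  rw [Matrix.trace, Matrix.trace]
  simp only [Matrix.diag, Matrix.of_apply, Matrix.mul_apply, trB, Finset.mul_sum]
  rw [Finset.sum_comm]
  refine Finset.sum_congr rfl fun i _ => ?_
  rw [Finset.sum_comm]

lemma aux_sum_rot {ι κ η : Type} [Fintype ι] [Fintype κ] [Fintype η] (f : ι → κ → η → ℂ) :
    ∑ i, ∑ i', ∑ j, f i i' j = ∑ j, ∑ i, ∑ i', f i i' j :=
  calc ∑ i, ∑ i', ∑ j, f i i' j = ∑ i, ∑ j, ∑ i', f i i' j :=
        Finset.sum_congr rfl (fun _ _ => Finset.sum_comm)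
    _ = ∑ j, ∑ i, ∑ i', f i i' j := Finset.sum_comm

section Purif

variable {m n : ℕ} (R ρ₀ : Matrix (Fin m × Fin n) (Fin m × Fin n) ℂ)

/-- The purification reshaped: rows indexed by `A × C`, columns by `B`. -/
def sigN : Matrix (Fin m × Fin (m*n)) (Fin n) ℂ :=
  Matrix.of fun p j => R (p.1, j) (finProdFinEquiv.symm p.2)

/-- The extension `σ` of `ρ` on `A × C`. -/
def sigM : Matrix (Fin m × Fin (m*n)) (Fin m × Fin (m*n)) ℂ := sigN R * (sigN R)ᴴ

/-- The matrix whose rows/columns give the conditional states. -/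
def GM (x : Fin m → ℂ) : Matrix (Fin (m*n)) (Fin n) ℂ :=
  Matrix.of fun c j => ∑ i, star (x i) * R ((i, j)) (finProdFinEquiv.symm c)

lemma sigM_apply (p q : Fin m × Fin (m*n)) :
    sigM R p q = ∑ j, R (p.1, j) (finProdFinEquiv.symm p.2)
      * star (R (q.1, j) (finProdFinEquiv.symm q.2)) := by
  simp [sigM, sigN, Matrix.mul_apply, Matrix.conjTranspose_apply]

lemma sigM_posSemidef : (sigM R).PosSemidef :=
  Matrix.posSemidef_self_mul_conjTranspose _

variable (hRρ : ∀ a b, ∑ y, R a y * star (R b y) = ρ₀ a b)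
  (hRap : ∀ a b, star (R a b) = R b a)
  (hρap : ∀ a b, star (ρ₀ a b) = ρ₀ b a)

include hRρ hRap hρap in
lemma aux_hsum2 : ∀ a b, ∑ y, R y a * star (R y b) = ρ₀ b a := by
  intro a b
  calc ∑ y, R y a * star (R y b) = ∑ y, star (R a y * star (R b y)) := by
        refine Finset.sum_congr rfl fun y _ => ?_
        rw [star_mul', star_star, hRap a y, hRap y b]
    _ = star (∑ y, R a y * star (R b y)) := (star_sum _ _).symm
    _ = star (ρ₀ a b) := by rw [hRρ]
    _ = ρ₀ b a := hρap a b

include hRρ hρap in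
lemma aux_hsum3 : ∀ a b, ∑ y, star (R a y) * R b y = ρ₀ b a := by
  intro a b
  calc ∑ y, star (R a y) * R b y = ∑ y, star (R a y * star (R b y)) := by
        refine Finset.sum_congr rfl fun y _ => ?_
        rw [star_mul', star_star, mul_comm]
    _ = star (∑ y, R a y * star (R b y)) := (star_sum _ _).symm
    _ = star (ρ₀ a b) := by rw [hRρ]
    _ = ρ₀ b a := hρap a b

include hRρ in
lemma trB_sigM : trB (sigM R) = trB ρ₀ := by
  ext i i'
  simp only [trB, Matrix.of_apply, sigM_apply]
  rw [Finset.sum_comm]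
  refine Finset.sum_congr rfl fun j _ => ?_
  rw [← hRρ (i, j) (i', j)]
  exact Equiv.sum_comp (finProdFinEquiv.symm : Fin (m*n) ≃ Fin m × Fin n)
    (fun y => R (i, j) y * star (R (i', j) y))

include hRρ hRap hρap in
lemma trA_sigM : trA (sigM R)
    = Matrix.of fun c c' => ρ₀ (finProdFinEquiv.symm c') (finProdFinEquiv.symm c) := by
  ext c c'
  simp only [trA, Matrix.of_apply, sigM_apply]
  rw [show (∑ i, ∑ j, R (i, j) (finProdFinEquiv.symm c)
        * star (R (i, j) (finProdFinEquiv.symm c')))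
      = ∑ y : Fin m × Fin n, R y (finProdFinEquiv.symm c) * star (R y (finProdFinEquiv.symm c'))
    from (Fintype.sum_prod_type (fun y : Fin m × Fin n =>
      R y (finProdFinEquiv.symm c) * star (R y (finProdFinEquiv.symm c')))).symm]
  exact aux_hsum2 R ρ₀ hRρ hRap hρap (finProdFinEquiv.symm c) (finProdFinEquiv.symm c')

include hRρ hRap hρap in
lemma S_trA_sigM (S : EntropyFamily) (hspec : S.SpectrumDep) (hpsd : ρ₀.PosSemidef) :
    S (Fin (m*n)) (trA (sigM R)) = S (Fin m × Fin n) ρ₀ := by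
  set A1 : Matrix (Fin (m*n)) (Fin m × Fin n) ℂ :=
    Matrix.of fun c y => R y (finProdFinEquiv.symm c) with hA1
  have h1 : A1 * A1ᴴ = trA (sigM R) := by
    rw [trA_sigM R ρ₀ hRρ hRap hρap]
    ext c c'
    simp only [Matrix.mul_apply, Matrix.conjTranspose_apply, hA1, Matrix.of_apply]
    exact aux_hsum2 R ρ₀ hRρ hRap hρap (finProdFinEquiv.symm c) (finProdFinEquiv.symm c')
  have h2 : A1ᴴ * A1 = ρ₀ᵀ := by
    ext y y'
    simp only [Matrix.mul_apply, Matrix.conjTranspose_apply, hA1, Matrix.of_apply,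
      Matrix.transpose_apply]
    rw [← aux_hsum3 R ρ₀ hRρ hρap y y']
    exact Equiv.sum_comp (finProdFinEquiv.symm : Fin (m*n) ≃ Fin m × Fin n)
      (fun z => star (R y z) * R y' z)
  rw [← h1, hspec _ _ A1, h2, aux_S_transpose S hspec hpsd]

lemma GM_cond_sigma (x : Fin m → ℂ) :
    trA ((EMat x ⊗ₖ (1 : Matrix (Fin (m*n)) (Fin (m*n)) ℂ)) * sigM R)
      = GM R x * (GM R x)ᴴ := by
  rw [aux_trA_kron_mul]
  ext c c'
  simp only [Matrix.of_apply, EMat, sigM_apply, GM, Matrix.mul_apply,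
    Matrix.conjTranspose_apply, star_sum, star_mul', star_star]
  simp only [Finset.mul_sum, Finset.sum_mul]
  rw [aux_sum_rot (fun i i' j => x i * star (x i')
    * (R (i', j) (finProdFinEquiv.symm c) * star (R (i, j) (finProdFinEquiv.symm c'))))]
  refine Finset.sum_congr rfl fun j _ => Finset.sum_congr rfl fun a _ =>
    Finset.sum_congr rfl fun b _ => by ring

include hRρ hρap in
lemma GM_cond_orig (x : Fin m → ℂ) :
    (GM R x)ᴴ * GM R x
      = (trA ((EMat x ⊗ₖ (1 : Matrix (Fin n) (Fin n) ℂ)) * ρ₀))ᵀ := by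
  rw [aux_trA_kron_mul]
  ext j j'
  simp only [Matrix.mul_apply, Matrix.conjTranspose_apply, GM, Matrix.of_apply,
    Matrix.transpose_apply, EMat, star_sum, star_mul', star_star]
  rw [show (∑ c : Fin (m*n), (∑ a, x a * star (R (a, j) (finProdFinEquiv.symm c)))
        * ∑ b, star (x b) * R (b, j') (finProdFinEquiv.symm c))
      = ∑ y : Fin m × Fin n, (∑ a, x a * star (R (a, j) y)) * ∑ b, star (x b) * R (b, j') y
    from Equiv.sum_comp (finProdFinEquiv.symm : Fin (m*n) ≃ Fin m × Fin n)
      (fun y => (∑ a, x a * star (R (a, j) y)) * ∑ b, star (x b) * R (b, j') y)]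
  simp only [Finset.sum_mul_sum]
  rw [← aux_sum_rot (fun a b y => (x a * star (R (a, j) y)) * (star (x b) * R (b, j') y))]
  refine Finset.sum_congr rfl fun a _ => Finset.sum_congr rfl fun b _ => ?_
  calc ∑ y, (x a * star (R (a, j) y)) * (star (x b) * R (b, j') y)
      = (x a * star (x b)) * ∑ y, star (R (a, j) y) * R (b, j') y := by
        rw [Finset.mul_sum]
        exact Finset.sum_congr rfl fun y _ => by ring
    _ = x a * star (x b) * ρ₀ (b, j') (a, j) := by
        rw [aux_hsum3 R ρ₀ hRρ hρap]

end Purif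

end FirmSubAux

/-- `χ(P, b) ≤ S(ρ_a)` implies firm subadditivity. -/
theorem holevo_le_entropy_implies_firm_subadditivity
    (S : EntropyFamily) (hconc : S.Concave) (hspec : S.SpectrumDep)
    (h : ∀ (m n k : ℕ) (ρ : Matrix (Fin m × Fin n) (Fin m × Fin n) ℂ)
      (P : Fin k → Matrix (Fin m) (Fin m) ℂ), IsDensity ρ → IsPOVM P →
      holevoB S P ρ ≤ S (Fin m) (trB ρ))
    (m n k : ℕ) (ρ : Matrix (Fin m × Fin n) (Fin m × Fin n) ℂ) (hρ : IsDensity ρ)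
    (P : Fin k → Matrix (Fin m) (Fin m) ℂ) (hP : IsPOVM P) :
    holevoB S P ρ ≤ S (Fin m) (trB ρ) + S (Fin n) (trA ρ) - S (Fin m × Fin n) ρ := by
  classical
  obtain ⟨hρpsd, hρtr⟩ := hρ
  obtain ⟨hPpsd, hPsum⟩ := hP
  set R : Matrix (Fin m × Fin n) (Fin m × Fin n) ℂ := psqrt ρ with hRdef
  have hRH : Rᴴ = R := (psqrt_psd ρ).1
  have hRap : ∀ a b, star (R a b) = R b a :=
    fun a b => aux_herm_apply (psqrt_psd ρ).1 a b
  have hρap : ∀ a b, star (ρ a b) = ρ b a :=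
    fun a b => aux_herm_apply hρpsd.1 a b
  have hRρ : ∀ a b, ∑ y, R a y * star (R b y) = ρ a b := by
    intro a b
    rw [Finset.sum_congr rfl fun y _ => by rw [hRap b y], ← Matrix.mul_apply,
      psqrt_mul_self hρpsd]
  -- nonemptiness of the index types
  have hne : Nonempty (Fin m × Fin n) := by
    by_contra hc
    rw [not_nonempty_iff] at hc
    rw [Matrix.trace, Finset.univ_eq_empty, Finset.sum_empty] at hρtr
    exact zero_ne_one hρtr
  have hnen : Nonempty (Fin n) := ⟨(Classical.arbitrary (Fin m × Fin n)).2⟩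
  -- square roots of the POVM elements and the refined rank-one POVM
  set s : Fin k → Matrix (Fin m) (Fin m) ℂ := fun j => psqrt (P j) with hsdef
  have hsap : ∀ j a b, star (s j a b) = s j b a :=
    fun j a b => aux_herm_apply (psqrt_psd (P j)).1 a b
  set xv : Fin k × Fin m → (Fin m → ℂ) := fun u i => s u.1 i u.2 with hxv
  set E : Fin (k*m) → Matrix (Fin m) (Fin m) ℂ :=
    fun t => EMat (xv (finProdFinEquiv.symm t)) with hE
  have hEsum1 : ∀ j, ∑ l, EMat (xv (j, l)) = P j := by
    intro j
    ext i i'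
    rw [show P j = s j * s j from (psqrt_mul_self (hPpsd j)).symm, Matrix.mul_apply]
    simp only [Matrix.sum_apply, EMat, Matrix.of_apply, hxv]
    exact Finset.sum_congr rfl fun l _ => by rw [hsap]
  have hEpovm : IsPOVM E := by
    constructor
    · intro t
      exact EMat_posSemidef _
    · rw [show (∑ t, E t) = ∑ u : Fin k × Fin m, EMat (xv u) from
        Equiv.sum_comp (finProdFinEquiv.symm : Fin (k*m) ≃ Fin k × Fin m)
          (fun u => EMat (xv u)), Fintype.sum_prod_type,
        Finset.sum_congr rfl fun j _ => hEsum1 j]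
      exact hPsum
  -- σ is a density matrix
  have hσtrB : trB (sigM R) = trB ρ := trB_sigM R ρ hRρ
  have hσdens : IsDensity (sigM R) := by
    refine ⟨sigM_posSemidef R, ?_⟩
    rw [← aux_trace_trB, hσtrB, aux_trace_trB, hρtr]
  -- probabilities
  have hprobσ : ∀ u, prob (EMat (xv u)) (sigM R) = prob (EMat (xv u)) ρ := by
    intro u
    rw [aux_prob_eq, hσtrB, ← aux_prob_eq]
  have hpq : ∀ j, prob (P j) ρ = ∑ l, prob (EMat (xv (j, l))) ρ := by
    intro j
    simp only [aux_prob_eq]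
    rw [← Complex.re_sum, ← Matrix.trace_sum, ← Finset.sum_mul, hEsum1]
  -- trace identities for the conditional states
  have hqsum : ∀ u, prob (EMat (xv u)) ρ = ∑ c, ∑ j', Complex.normSq (GM R (xv u) c j') := by
    intro u
    rw [← hprobσ u, prob, ← aux_trace_trA, GM_cond_sigma R (xv u)]
    rw [Matrix.trace]
    simp only [Matrix.diag, Matrix.mul_apply, Matrix.conjTranspose_apply,
      ← Complex.star_def]
    rw [show (∑ c, ∑ j', GM R (xv u) c j' * star (GM R (xv u) c j'))
        = ((∑ c, ∑ j', Complex.normSq (GM R (xv u) c j') : ℝ) : ℂ) by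
      push_cast
      refine Finset.sum_congr rfl fun c _ => Finset.sum_congr rfl fun j' _ => ?_
      rw [← Complex.mul_conj]
      rfl]
    rw [Complex.ofReal_re]
  have hq0 : ∀ u, 0 ≤ prob (EMat (xv u)) ρ := by
    intro u
    rw [hqsum u]
    exact Finset.sum_nonneg fun c _ => Finset.sum_nonneg fun j' _ => Complex.normSq_nonneg _
  have hp0 : ∀ j, 0 ≤ prob (P j) ρ := by
    intro j
    rw [hpq j]
    exact Finset.sum_nonneg fun l _ => hq0 (j, l)
  have hqtrace : ∀ u, ((GM R (xv u)) * (GM R (xv u))ᴴ).trace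
      = ((prob (EMat (xv u)) ρ : ℝ) : ℂ) := by
    intro u
    rw [hqsum u]
    rw [Matrix.trace]
    simp only [Matrix.diag, Matrix.mul_apply, Matrix.conjTranspose_apply, ← Complex.star_def]
    push_cast
    refine Finset.sum_congr rfl fun c _ => Finset.sum_congr rfl fun j' _ => ?_
    rw [← Complex.mul_conj]
    rfl
  have hzeroG : ∀ u, prob (EMat (xv u)) ρ = 0 → GM R (xv u) = 0 := by
    intro u hu
    rw [hqsum u] at hu
    ext c j'
    have h1 : ∀ c ∈ Finset.univ, (∑ j', Complex.normSq (GM R (xv u) c j')) = 0 :=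
      (Finset.sum_eq_zero_iff_of_nonneg
        (fun c _ => Finset.sum_nonneg fun j' _ => Complex.normSq_nonneg _)).mp hu
    have h2 : ∀ j' ∈ Finset.univ, Complex.normSq (GM R (xv u) c j') = 0 :=
      (Finset.sum_eq_zero_iff_of_nonneg (fun j' _ => Complex.normSq_nonneg _)).mp
        (h1 c (Finset.mem_univ c))
    simpa using Complex.normSq_eq_zero.mp (h2 j' (Finset.mem_univ j'))
  have hzeroF : ∀ u, prob (EMat (xv u)) ρ = 0 →
      trA ((EMat (xv u) ⊗ₖ (1 : Matrix (Fin n) (Fin n) ℂ)) * ρ) = 0 := by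
    intro u hu
    have hG := hzeroG u hu
    have := GM_cond_orig R ρ hRρ hρap (xv u)
    rw [hG] at this
    simp only [Matrix.zero_mul, Matrix.conjTranspose_zero] at this
    rw [← Matrix.transpose_eq_zero]
    exact this.symm
  -- entropy identification for the conditional states on the two sides
  have hScond : ∀ u, prob (EMat (xv u)) ρ ≠ 0 →
      S (Fin (m*n)) (condB (EMat (xv u)) (sigM R))
        = S (Fin n) ((condB (EMat (xv u)) ρ)ᵀ) := by
    intro u hu
    rw [condB, hprobσ u, GM_cond_sigma R (xv u),
      aux_smul_spec S hspec (GM R (xv u)) (inv_nonneg.mpr (hq0 u)),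
      GM_cond_orig R ρ hRρ hρap (xv u), ← Matrix.transpose_smul, condB]
  have hconddens : ∀ u, prob (EMat (xv u)) ρ ≠ 0 →
      IsDensity ((condB (EMat (xv u)) ρ)ᵀ) := by
    intro u hu
    have heq : (condB (EMat (xv u)) ρ)ᵀ
        = (((prob (EMat (xv u)) ρ)⁻¹ : ℝ) : ℂ) • ((GM R (xv u))ᴴ * GM R (xv u)) := by
      rw [condB, Matrix.transpose_smul, ← GM_cond_orig R ρ hRρ hρap (xv u)]
    constructor
    · rw [heq]
      have := aux_smul_psd (GM R (xv u))ᴴ (inv_nonneg.mpr (hq0 u))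
      rwa [Matrix.conjTranspose_conjTranspose] at this
    · rw [heq, Matrix.trace_smul, Matrix.trace_mul_comm, hqtrace u, smul_eq_mul,
        ← Complex.ofReal_mul, inv_mul_cancel₀ hu, Complex.ofReal_one]
  -- the per-outcome concavity estimate
  have key : ∀ j, (∑ l, prob (EMat (xv (j, l))) ρ
        * S (Fin (m*n)) (condB (EMat (xv (j, l))) (sigM R)))
      ≤ prob (P j) ρ * S (Fin n) (condB (P j) ρ) := by
    intro j
    by_cases hpj : prob (P j) ρ = 0
    · have hq' : ∀ l, prob (EMat (xv (j, l))) ρ = 0 := by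
        intro l
        have := (Finset.sum_eq_zero_iff_of_nonneg (fun l _ => hq0 (j, l))).mp
          ((hpq j).symm.trans hpj)
        exact this l (Finset.mem_univ l)
      rw [hpj, zero_mul]
      rw [Finset.sum_congr rfl fun l _ => by rw [hq' l, zero_mul]]
      simp
    · have hpj' : 0 < prob (P j) ρ := lt_of_le_of_ne (hp0 j) (Ne.symm hpj)
      set w : Fin m → ℝ := fun l => prob (EMat (xv (j, l))) ρ / prob (P j) ρ with hw
      set X : Fin m → Matrix (Fin n) (Fin n) ℂ := fun l =>
        if prob (EMat (xv (j, l))) ρ = 0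
          then (((Fintype.card (Fin n) : ℝ)⁻¹ : ℝ) : ℂ) • (1 : Matrix (Fin n) (Fin n) ℂ)
          else (condB (EMat (xv (j, l))) ρ)ᵀ with hX
      have hw0 : ∀ l, 0 ≤ w l := fun l => div_nonneg (hq0 (j, l)) (hp0 j)
      have hw1 : ∑ l, w l = 1 := by
        simp only [hw]
        rw [← Finset.sum_div, ← hpq j, div_self hpj]
      have hXd : ∀ l, IsDensity (X l) := by
        intro l
        simp only [hX]
        by_cases hql : prob (EMat (xv (j, l))) ρ = 0
        · rw [if_pos hql]
          exact aux_uniform_density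
        · rw [if_neg hql]
          exact hconddens (j, l) hql
      have hcon := hconc (Fin n) m w X hw0 hw1 hXd
      have hsumX : ∑ l, ((w l : ℝ) : ℂ) • X l = (condB (P j) ρ)ᵀ := by
        have hterm : ∀ l, ((w l : ℝ) : ℂ) • X l
            = (((prob (P j) ρ)⁻¹ : ℝ) : ℂ)
              • (trA ((EMat (xv (j, l)) ⊗ₖ (1 : Matrix (Fin n) (Fin n) ℂ)) * ρ))ᵀ := by
          intro l
          by_cases hql : prob (EMat (xv (j, l))) ρ = 0
          · simp only [hX]
            rw [if_pos hql, hzeroF (j, l) hql]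
            have hwl : w l = 0 := by simp [hw, hql]
            rw [hwl]
            simp
          · simp only [hX, hw]
            rw [if_neg hql, condB, Matrix.transpose_smul, smul_smul,
              ← Complex.ofReal_mul]
            congr 2
            field_simp
        rw [Finset.sum_congr rfl fun l _ => hterm l, ← Finset.smul_sum,
          ← Matrix.transpose_sum, ← aux_trA_sum, ← Finset.sum_mul, ← aux_kron_sum,
          hEsum1 j, condB, Matrix.transpose_smul]
      have hcondpsd : ((condB (P j) ρ)ᵀ).PosSemidef := by
        rw [← hsumX]
        refine Finset.sum_induction _ _ (fun a b ha hb => ha.add hb) ?_ ?_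
        · exact Matrix.PosSemidef.zero
        · intro l _
          have hMeq : X l = psqrt (X l) * (psqrt (X l))ᴴ := by
            rw [(psqrt_psd (X l)).1, psqrt_mul_self (hXd l).1]
          rw [hMeq]
          exact aux_smul_psd _ (hw0 l)
      have hStrans : S (Fin n) ((condB (P j) ρ)ᵀ) = S (Fin n) (condB (P j) ρ) := by
        have := aux_S_transpose S hspec hcondpsd
        rw [Matrix.transpose_transpose] at this
        exact this.symm
      have hterm2 : ∀ l, prob (EMat (xv (j, l))) ρ
          * S (Fin (m*n)) (condB (EMat (xv (j, l))) (sigM R))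
          = prob (P j) ρ * (w l * S (Fin n) (X l)) := by
        intro l
        by_cases hql : prob (EMat (xv (j, l))) ρ = 0
        · simp only [hw]
          rw [hql]
          simp
        · rw [hScond (j, l) hql]
          simp only [hX, hw]
          rw [if_neg hql]
          field_simp
      rw [Finset.sum_congr rfl fun l _ => hterm2 l, ← Finset.mul_sum]
      calc prob (P j) ρ * ∑ l, w l * S (Fin n) (X l)
          ≤ prob (P j) ρ * S (Fin n) (∑ l, ((w l : ℝ) : ℂ) • X l) :=
            mul_le_mul_of_nonneg_left hcon (hp0 j)
        _ = prob (P j) ρ * S (Fin n) (condB (P j) ρ) := by rw [hsumX, hStrans]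
  -- apply the hypothesis to the extension σ with the refined POVM
  have happ := h m (m*n) (k*m) (sigM R) E hσdens hEpovm
  rw [holevoB, hσtrB, S_trA_sigM R ρ hRρ hRap hρap S hspec hρpsd] at happ
  rw [aux_sum_filter_mul (fun t => prob (E t) (sigM R))
    (fun t => S (Fin (m*n)) (condB (E t) (sigM R)))] at happ
  have hrsum : ∑ t, prob (E t) (sigM R) * S (Fin (m*n)) (condB (E t) (sigM R))
      = ∑ j, ∑ l, prob (EMat (xv (j, l))) ρ
        * S (Fin (m*n)) (condB (EMat (xv (j, l))) (sigM R)) := by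
    rw [show (∑ t, prob (E t) (sigM R) * S (Fin (m*n)) (condB (E t) (sigM R)))
        = ∑ u : Fin k × Fin m, prob (EMat (xv u)) (sigM R)
          * S (Fin (m*n)) (condB (EMat (xv u)) (sigM R)) from
      Equiv.sum_comp (finProdFinEquiv.symm : Fin (k*m) ≃ Fin k × Fin m)
        (fun u => prob (EMat (xv u)) (sigM R)
          * S (Fin (m*n)) (condB (EMat (xv u)) (sigM R))), Fintype.sum_prod_type]
    exact Finset.sum_congr rfl fun j _ => Finset.sum_congr rfl fun l _ => by
      rw [hprobσ (j, l)]
  rw [hrsum] at happ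
  have hsum_le : ∑ j, ∑ l, prob (EMat (xv (j, l))) ρ
        * S (Fin (m*n)) (condB (EMat (xv (j, l))) (sigM R))
      ≤ ∑ j, prob (P j) ρ * S (Fin n) (condB (P j) ρ) :=
    Finset.sum_le_sum fun j _ => key j
  rw [holevoB, aux_sum_filter_mul (fun j => prob (P j) ρ)
    (fun j => S (Fin n) (condB (P j) ρ))]
  linarith
end
end

section
/- Let S be a concave entropy family depending only on the nonzero spectrum. Suppose that for every bipartite density matrix ρ on ℂ^m⊗ℂ^n (all m, n) and every orthonormal basis {w_i}_{i∈Fin m} of ℂ^m, the projective POVM W = {w_i w_iᴴ} satisfies χ(W, b) ≤ S(ρ_a) + S(ρ_b) − S(ρ). Then S is firmly subadditive: for every bipartite density matrix ρ on ℂ^m⊗ℂ^n and every POVM {P_j} on ℂ^m, χ(P, b) ≤ S(ρ_a) + S(ρ_b) − S(ρ). -/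
open scoped Kronecker
open Finset Matrix
open scoped ComplexOrder

noncomputable section

section FSAHelpers

variable {d e : Type} [Fintype d] [DecidableEq d] [Fintype e] [DecidableEq e]

lemma psd_smul_real {M : Matrix d d ℂ} (hM : M.PosSemidef) {c : ℝ} (hc : 0 ≤ c) :
    (((c : ℂ)) • M).PosSemidef := by
  constructor
  · unfold Matrix.IsHermitian
    rw [Matrix.conjTranspose_smul, hM.1.eq]
    congr 1
    simp
  · intro x
    exact (hM.smul (a := (c : ℂ)) (by exact_mod_cast hc)).2 x

lemma psd_diag_nonneg {M : Matrix d d ℂ} (hM : M.PosSemidef) (i : d) : 0 ≤ M i i := by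
  exact hM.diag_nonneg

lemma psd_trace_nonneg {M : Matrix d d ℂ} (hM : M.PosSemidef) : 0 ≤ M.trace := by
  rw [Matrix.trace]
  exact Finset.sum_nonneg fun i _ => psd_diag_nonneg hM i

lemma nonneg_c_eq_re {z : ℂ} (hz : 0 ≤ z) : z = (z.re : ℂ) := by
  obtain ⟨h1, h2⟩ := Complex.nonneg_iff.mp hz
  exact Complex.ext rfl (by simp [← h2])

open scoped MatrixOrder in
def Matrix.PosSemidef.sqrt {M : Matrix d d ℂ} (_hM : M.PosSemidef) : Matrix d d ℂ :=
  CFC.sqrt M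

open scoped MatrixOrder in
lemma Matrix.PosSemidef.sqrt_mul_self {M : Matrix d d ℂ} (hM : M.PosSemidef) :
    hM.sqrt * hM.sqrt = M :=
  CFC.sqrt_mul_sqrt_self M (Matrix.nonneg_iff_posSemidef.mpr hM)

open scoped MatrixOrder in
lemma Matrix.PosSemidef.posSemidef_sqrt {M : Matrix d d ℂ} (hM : M.PosSemidef) :
    hM.sqrt.PosSemidef :=
  Matrix.nonneg_iff_posSemidef.mp (CFC.sqrt_nonneg M)

lemma psd_trace_zero {M : Matrix d d ℂ} (hM : M.PosSemidef) (h : M.trace = 0) : M = 0 := by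
  have hX : hM.sqrt * hM.sqrt = M := hM.sqrt_mul_self
  have hXh : hM.sqrtᴴ = hM.sqrt := hM.posSemidef_sqrt.isHermitian.eq
  have ht : (hM.sqrtᴴ * hM.sqrt).trace = 0 := by rw [hXh, hX, h]
  have hre : ∑ j, ∑ i, Complex.normSq (hM.sqrt i j) = 0 := by
    have h2 : ((hM.sqrtᴴ * hM.sqrt).trace).re = ∑ j, ∑ i, Complex.normSq (hM.sqrt i j) := by
      simp [Matrix.trace, Matrix.mul_apply, Matrix.conjTranspose_apply,
        ← Complex.normSq_eq_conj_mul_self, Complex.re_sum]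
    rw [← h2, ht, Complex.zero_re]
  have hz : ∀ i j, hM.sqrt i j = 0 := by
    intro i j
    have h3 : ∀ j ∈ Finset.univ, (0:ℝ) ≤ ∑ i, Complex.normSq (hM.sqrt i j) :=
      fun j _ => Finset.sum_nonneg fun i _ => Complex.normSq_nonneg _
    have h4 := (Finset.sum_eq_zero_iff_of_nonneg h3).mp hre j (Finset.mem_univ j)
    have h5 := (Finset.sum_eq_zero_iff_of_nonneg
      (fun i (_ : i ∈ Finset.univ) => Complex.normSq_nonneg (hM.sqrt i j))).mp h4 i
      (Finset.mem_univ i)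
    exact Complex.normSq_eq_zero.mp h5
  have hX0 : hM.sqrt = 0 := by ext i j; exact hz i j
  rw [← hX, hX0, Matrix.mul_zero]

lemma S_iso (S : EntropyFamily) (hspec : S.SpectrumDep)
    (V : Matrix e d ℂ) (hV : Vᴴ * V = 1) {ρ : Matrix d d ℂ} (hρ : ρ.PosSemidef) :
    S e (V * ρ * Vᴴ) = S d ρ := by
  obtain ⟨X, hX, hXh⟩ : ∃ X : Matrix d d ℂ, X * X = ρ ∧ Xᴴ = X :=
    ⟨hρ.sqrt, hρ.sqrt_mul_self, hρ.posSemidef_sqrt.isHermitian.eq⟩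
  have h1 : V * ρ * Vᴴ = (V * X) * (V * X)ᴴ := by
    rw [Matrix.conjTranspose_mul, hXh, ← hX]
    simp only [Matrix.mul_assoc]
  have h2 : (V * X)ᴴ * (V * X) = ρ := by
    rw [Matrix.conjTranspose_mul, hXh, Matrix.mul_assoc, ← Matrix.mul_assoc Vᴴ V,
      hV, Matrix.one_mul, hX]
  rw [h1, hspec _ _ _, h2]

variable {da db dc : Type} [Fintype da] [DecidableEq da] [Fintype db] [DecidableEq db]
  [Fintype dc] [DecidableEq dc]

set_option linter.unusedSectionVars false

lemma sandwich_apply (V : Matrix dc da ℂ) (ρ : Matrix (da × db) (da × db) ℂ)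
    (α α' : dc) (c c' : db) :
    ((V ⊗ₖ (1 : Matrix db db ℂ)) * ρ * (V ⊗ₖ (1 : Matrix db db ℂ))ᴴ) (α, c) (α', c')
      = ∑ i, ∑ i', V α i * ρ (i, c) (i', c') * star (V α' i') := by
  simp only [Matrix.mul_apply, Matrix.conjTranspose_apply, Matrix.kroneckerMap_apply,
    Matrix.one_apply, Fintype.sum_prod_type]
  simp only [apply_ite (star : ℂ → ℂ), star_zero, mul_ite, ite_mul, mul_one, one_mul,
    mul_zero, zero_mul, Finset.sum_ite_eq, Finset.sum_ite_eq', Finset.mem_univ, if_true]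
  rw [Finset.sum_comm]
  refine Finset.sum_congr rfl fun i _ => ?_
  rw [Finset.sum_mul]

set_option linter.unusedSectionVars false

lemma kron_one_conjT (V : Matrix dc da ℂ) :
    (V ⊗ₖ (1 : Matrix db db ℂ))ᴴ = Vᴴ ⊗ₖ (1 : Matrix db db ℂ) := by
  ext ⟨i, c⟩ ⟨α, d⟩
  simp only [Matrix.conjTranspose_apply, Matrix.kroneckerMap_apply, Matrix.one_apply,
    star_mul', apply_ite (star : ℂ → ℂ), star_one, star_zero]
  by_cases h : d = c <;> by_cases h' : c = d <;> simp_all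

lemma kron_one_conjT_mul_self (V : Matrix dc da ℂ) (hV : Vᴴ * V = 1) :
    (V ⊗ₖ (1 : Matrix db db ℂ))ᴴ * (V ⊗ₖ (1 : Matrix db db ℂ)) = 1 := by
  rw [kron_one_conjT, ← Matrix.mul_kronecker_mul, hV, Matrix.one_mul,
    Matrix.one_kronecker_one]

lemma trB_sandwich (V : Matrix dc da ℂ) (ρ : Matrix (da × db) (da × db) ℂ) :
    trB ((V ⊗ₖ (1 : Matrix db db ℂ)) * ρ * (V ⊗ₖ (1 : Matrix db db ℂ))ᴴ)
      = V * trB ρ * Vᴴ := by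
  ext α α'
  have lhs : trB ((V ⊗ₖ (1 : Matrix db db ℂ)) * ρ * (V ⊗ₖ (1 : Matrix db db ℂ))ᴴ) α α'
      = ∑ c, ∑ i, ∑ i', V α i * ρ (i, c) (i', c) * star (V α' i') := by
    simp only [trB, Matrix.of_apply, sandwich_apply]
  rw [lhs]
  simp only [Matrix.mul_apply, Matrix.conjTranspose_apply, trB, Matrix.of_apply,
    Finset.sum_mul]
  conv_rhs => rw [Finset.sum_comm]
  rw [Finset.sum_comm]
  refine Finset.sum_congr rfl fun i _ => ?_
  rw [Finset.sum_comm]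
  refine Finset.sum_congr rfl fun i' _ => ?_
  rw [Finset.mul_sum, Finset.sum_mul]

lemma trB_posSemidef {ρ : Matrix (da × db) (da × db) ℂ} (hρ : ρ.PosSemidef) :
    (trB ρ).PosSemidef := by
  have key : trB ρ = ∑ c : db,
      (Matrix.of fun (p : da × db) (i : da) => if p = (i, c) then (1:ℂ) else 0)ᴴ * ρ *
      (Matrix.of fun (p : da × db) (i : da) => if p = (i, c) then (1:ℂ) else 0) := by
    ext i i'
    simp only [trB, Matrix.of_apply, Matrix.sum_apply, Matrix.mul_apply,
      Matrix.conjTranspose_apply, Matrix.of_apply, Fintype.sum_prod_type,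
      apply_ite (star : ℂ → ℂ), star_zero, star_one, mul_ite, ite_mul, mul_one, one_mul,
      mul_zero, zero_mul, Prod.mk.injEq]
    simp [ite_and, Finset.sum_ite_eq, Finset.sum_ite_eq']
  rw [key]
  exact Finset.sum_induction _ _ (fun a b ha hb => ha.add hb) (Matrix.PosSemidef.zero)
    (fun c _ => hρ.conjTranspose_mul_mul_same _)

lemma trace_trA (X : Matrix (da × db) (da × db) ℂ) : (trA X).trace = X.trace := by
  simp only [Matrix.trace, Matrix.diag_apply, trA, Matrix.of_apply, Fintype.sum_prod_type]
  exact Finset.sum_comm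

lemma projector_mul_apply (β : dc) (σ : Matrix (dc × db) (dc × db) ℂ)
    (α α' : dc) (c c' : db) :
    ((outer (fun x => if β = x then (1:ℂ) else 0) ⊗ₖ (1 : Matrix db db ℂ)) * σ) (α, c) (α', c')
      = if α = β then σ (β, c) (α', c') else 0 := by
  simp only [Matrix.mul_apply, outer, Matrix.kroneckerMap_apply, Matrix.vecMulVec_apply,
    Pi.star_apply, apply_ite (star : ℂ → ℂ), star_zero, star_one, Matrix.one_apply,
    Fintype.sum_prod_type, mul_ite, ite_mul, mul_one, one_mul, mul_zero, zero_mul,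
    Finset.sum_ite_eq, Finset.sum_ite_eq', Finset.mem_univ, if_true, eq_comm]

lemma trA_sandwich (V : Matrix dc da ℂ) (hV : Vᴴ * V = 1)
    (ρ : Matrix (da × db) (da × db) ℂ) :
    trA ((V ⊗ₖ (1 : Matrix db db ℂ)) * ρ * (V ⊗ₖ (1 : Matrix db db ℂ))ᴴ) = trA ρ := by
  ext c c'
  have lhs : trA ((V ⊗ₖ (1 : Matrix db db ℂ)) * ρ * (V ⊗ₖ (1 : Matrix db db ℂ))ᴴ) c c'
      = ∑ α, ∑ i, ∑ i', V α i * ρ (i, c) (i', c') * star (V α i') := by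
    simp only [trA, Matrix.of_apply, sandwich_apply]
  rw [lhs]
  have step : ∀ i i', ∑ α, V α i * ρ (i, c) (i', c') * star (V α i')
      = (Vᴴ * V) i' i * ρ (i, c) (i', c') := by
    intro i i'
    rw [Matrix.mul_apply, Finset.sum_mul]
    exact Finset.sum_congr rfl fun α _ => by
      rw [Matrix.conjTranspose_apply]; ring
  rw [Finset.sum_comm]
  calc ∑ i, ∑ α, ∑ i', V α i * ρ (i, c) (i', c') * star (V α i')
      = ∑ i, ∑ i', ∑ α, V α i * ρ (i, c) (i', c') * star (V α i') := by
        exact Finset.sum_congr rfl fun i _ => Finset.sum_comm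
    _ = ∑ i, ∑ i', (Vᴴ * V) i' i * ρ (i, c) (i', c') := by
        exact Finset.sum_congr rfl fun i _ => Finset.sum_congr rfl fun i' _ => step i i'
    _ = trA ρ c c' := by
        rw [hV]
        simp [Matrix.one_apply, trA, Finset.sum_ite_eq, Finset.sum_ite_eq']

lemma group_sum (Qj : Matrix da da ℂ) (ρ : Matrix (da × db) (da × db) ℂ) (c c' : db) :
    ∑ a, ∑ i, ∑ i', Qj a i * ρ (i, c) (i', c') * star (Qj a i')
      = trA (((Qjᴴ * Qj) ⊗ₖ (1 : Matrix db db ℂ)) * ρ) c c' := by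
  have rhs : trA (((Qjᴴ * Qj) ⊗ₖ (1 : Matrix db db ℂ)) * ρ) c c'
      = ∑ i, ∑ i', (Qjᴴ * Qj) i i' * ρ (i', c) (i, c') := by
    simp only [trA, Matrix.of_apply, Matrix.mul_apply, Matrix.kroneckerMap_apply,
      Matrix.one_apply, Fintype.sum_prod_type, mul_ite, ite_mul, mul_one, one_mul,
      mul_zero, zero_mul, Finset.sum_ite_eq, Finset.sum_ite_eq', Finset.mem_univ, if_true]
  rw [rhs]
  have step : ∀ i i', ∑ a, Qj a i * ρ (i, c) (i', c') * star (Qj a i')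
      = (Qjᴴ * Qj) i' i * ρ (i, c) (i', c') := by
    intro i i'
    rw [Matrix.mul_apply, Finset.sum_mul]
    exact Finset.sum_congr rfl fun a _ => by
      rw [Matrix.conjTranspose_apply]; ring
  rw [Finset.sum_comm]
  calc ∑ i, ∑ a, ∑ i', Qj a i * ρ (i, c) (i', c') * star (Qj a i')
      = ∑ i, ∑ i', ∑ a, Qj a i * ρ (i, c) (i', c') * star (Qj a i') :=
        Finset.sum_congr rfl fun i _ => Finset.sum_comm
    _ = ∑ i, ∑ i', (Qjᴴ * Qj) i' i * ρ (i, c) (i', c') :=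
        Finset.sum_congr rfl fun i _ => Finset.sum_congr rfl fun i' _ => step i i'
    _ = ∑ i, ∑ i', (Qjᴴ * Qj) i i' * ρ (i', c) (i, c') := Finset.sum_comm

lemma compress_psd (σ : Matrix (dc × db) (dc × db) ℂ) (hσ : σ.PosSemidef) (β : dc) :
    (Matrix.of fun c c' => σ (β, c) (β, c') : Matrix db db ℂ).PosSemidef := by
  have key : (Matrix.of fun c c' => σ (β, c) (β, c') : Matrix db db ℂ)
      = (Matrix.of fun (p : dc × db) (c : db) => if p = (β, c) then (1:ℂ) else 0)ᴴ * σ *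
        (Matrix.of fun (p : dc × db) (c : db) => if p = (β, c) then (1:ℂ) else 0) := by
    ext c c'
    simp only [Matrix.of_apply, Matrix.mul_apply, Matrix.conjTranspose_apply,
      Fintype.sum_prod_type, apply_ite (star : ℂ → ℂ), star_zero, star_one,
      mul_ite, ite_mul, mul_one, one_mul, mul_zero, zero_mul, Prod.mk.injEq]
    simp [ite_and, Finset.sum_ite_eq, Finset.sum_ite_eq']
  rw [key]
  exact hσ.conjTranspose_mul_mul_same _

end FSAHelpers

/-- firm subadditivity for all projective (orthonormal basis)
POVMs implies firm subadditivity for all POVMs. -/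
theorem projective_fsa_implies_fsa
    (S : EntropyFamily) (hconc : S.Concave) (hspec : S.SpectrumDep)
    (hproj : ∀ (m n : ℕ) (ρ : Matrix (Fin m × Fin n) (Fin m × Fin n) ℂ),
      IsDensity ρ → ∀ (w : Fin m → Fin m → ℂ),
      (∀ i i', ∑ x, star (w i x) * w i' x = if i = i' then 1 else 0) →
      holevoB S (fun i => outer (w i)) ρ ≤
        S (Fin m) (trB ρ) + S (Fin n) (trA ρ) - S (Fin m × Fin n) ρ)
    (m n k : ℕ) (ρ : Matrix (Fin m × Fin n) (Fin m × Fin n) ℂ) (hρ : IsDensity ρ)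
    (P : Fin k → Matrix (Fin m) (Fin m) ℂ) (hP : IsPOVM P) :
    holevoB S P ρ ≤ S (Fin m) (trB ρ) + S (Fin n) (trA ρ) - S (Fin m × Fin n) ρ := by
  classical
  obtain ⟨hρPSD, hρtr⟩ := hρ
  obtain ⟨hPpsd, hPsum⟩ := hP
  have hQex : ∀ j, ∃ Qj : Matrix (Fin m) (Fin m) ℂ, Qj * Qj = P j ∧ Qjᴴ = Qj :=
    fun j => ⟨(hPpsd j).sqrt, (hPpsd j).sqrt_mul_self,
      (hPpsd j).posSemidef_sqrt.isHermitian.eq⟩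
  choose Q hQ hQh using hQex
  set e0 : Fin m × Fin k ≃ Fin (m * k) := finProdFinEquiv with he0def
  set V : Matrix (Fin (m * k)) (Fin m) ℂ :=
    Matrix.of (fun α i => Q (e0.symm α).2 (e0.symm α).1 i) with hVdef
  have hVe : ∀ (a : Fin m) (j : Fin k) (i : Fin m), V (e0 (a, j)) i = Q j a i := by
    intro a j i
    simp [hVdef]
  have hVV : Vᴴ * V = 1 := by
    ext i i'
    have h0 : (Vᴴ * V) i i' = ∑ α, star (V α i) * V α i' := by
      simp [Matrix.mul_apply, Matrix.conjTranspose_apply]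
    have hswap : ∑ α, star (V α i) * V α i'
        = ∑ p : Fin m × Fin k, star (V (e0 p) i) * V (e0 p) i' :=
      (Equiv.sum_comp e0 (fun α => star (V α i) * V α i')).symm
    have hj : ∀ j : Fin k, ∑ a, star (Q j a i) * Q j a i' = P j i i' := by
      intro j
      have h2 : ((Q j)ᴴ * Q j) i i' = ∑ a, star (Q j a i) * Q j a i' := by
        simp [Matrix.mul_apply, Matrix.conjTranspose_apply]
      rw [← h2, hQh, hQ]
    rw [h0, hswap]
    calc ∑ p : Fin m × Fin k, star (V (e0 p) i) * V (e0 p) i'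
        = ∑ a, ∑ j, star (Q j a i) * Q j a i' := by
          rw [Fintype.sum_prod_type]
          exact Finset.sum_congr rfl fun a _ => Finset.sum_congr rfl fun j _ => by
            simp only [hVe]
      _ = ∑ j, ∑ a, star (Q j a i) * Q j a i' := Finset.sum_comm
      _ = ∑ j, P j i i' := Finset.sum_congr rfl fun j _ => hj j
      _ = (∑ j, P j) i i' := by rw [Matrix.sum_apply]
      _ = (1 : Matrix (Fin m) (Fin m) ℂ) i i' := by rw [hPsum]
  set ρ' : Matrix (Fin (m * k) × Fin n) (Fin (m * k) × Fin n) ℂ :=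
    (V ⊗ₖ (1 : Matrix (Fin n) (Fin n) ℂ)) * ρ * (V ⊗ₖ (1 : Matrix (Fin n) (Fin n) ℂ))ᴴ
    with hρ'def
  have hBB : (V ⊗ₖ (1 : Matrix (Fin n) (Fin n) ℂ))ᴴ * (V ⊗ₖ (1 : Matrix (Fin n) (Fin n) ℂ))
      = 1 := kron_one_conjT_mul_self V hVV
  have hρ'psd : ρ'.PosSemidef := hρPSD.mul_mul_conjTranspose_same _
  have hρ'tr : ρ'.trace = 1 := by
    rw [hρ'def, Matrix.trace_mul_comm, ← Matrix.mul_assoc, hBB, Matrix.one_mul, hρtr]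
  set w : Fin (m * k) → Fin (m * k) → ℂ := fun β x => if β = x then 1 else 0 with hwdef
  have hw : ∀ i i', ∑ x, star (w i x) * w i' x = if i = i' then (1:ℂ) else 0 := by
    intro i i'
    simp only [hwdef, apply_ite (star : ℂ → ℂ), star_one, star_zero, ite_mul, mul_ite,
      one_mul, mul_one, zero_mul, mul_zero]
    by_cases h : i = i' <;> simp [h, Finset.sum_ite_eq, eq_comm]
  set Mb : Fin (m * k) → Matrix (Fin n) (Fin n) ℂ :=
    fun β => Matrix.of fun c c' => ρ' (β, c) (β, c') with hMbdef
  have hMpsd : ∀ β, (Mb β).PosSemidef := fun β => compress_psd ρ' hρ'psd β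
  have htrA' : ∀ β, trA ((outer (w β) ⊗ₖ (1 : Matrix (Fin n) (Fin n) ℂ)) * ρ') = Mb β := by
    intro β
    ext c c'
    have h1 : ∀ α, ((outer (w β) ⊗ₖ (1 : Matrix (Fin n) (Fin n) ℂ)) * ρ') (α, c) (α, c')
        = if α = β then ρ' (β, c) (α, c') else 0 := by
      intro α
      simp only [hwdef]
      exact projector_mul_apply β ρ' α α c c'
    calc trA ((outer (w β) ⊗ₖ (1 : Matrix (Fin n) (Fin n) ℂ)) * ρ') c c'
        = ∑ α, if α = β then ρ' (β, c) (α, c') else 0 := by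
          simp only [trA, Matrix.of_apply]
          exact Finset.sum_congr rfl fun α _ => h1 α
      _ = ρ' (β, c) (β, c') := by rw [Finset.sum_ite_eq' Finset.univ β fun α => ρ' (β, c) (α, c')]; simp
      _ = Mb β c c' := rfl
  have htr : ∀ β, (((outer (w β) ⊗ₖ (1 : Matrix (Fin n) (Fin n) ℂ)) * ρ')).trace
      = (Mb β).trace := by
    intro β
    have h1 : ∀ α c, ((outer (w β) ⊗ₖ (1 : Matrix (Fin n) (Fin n) ℂ)) * ρ') (α, c) (α, c)
        = if α = β then ρ' (β, c) (α, c) else 0 := by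
      intro α c
      simp only [hwdef]
      exact projector_mul_apply β ρ' α α c c
    calc (((outer (w β) ⊗ₖ (1 : Matrix (Fin n) (Fin n) ℂ)) * ρ')).trace
        = ∑ α, ∑ c, (if α = β then ρ' (β, c) (α, c) else 0) := by
          rw [Matrix.trace, Fintype.sum_prod_type]
          exact Finset.sum_congr rfl fun α _ => Finset.sum_congr rfl fun c _ => h1 α c
      _ = ∑ α, if α = β then ∑ c, ρ' (β, c) (α, c) else 0 := by
          exact Finset.sum_congr rfl fun α _ => by split <;> simp
      _ = ∑ c, ρ' (β, c) (β, c) := by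
          rw [Finset.sum_ite_eq' Finset.univ β fun α => ∑ c, ρ' (β, c) (α, c)]; simp
      _ = (Mb β).trace := by rw [Matrix.trace]; rfl
  have hprob' : ∀ β, prob (outer (w β)) ρ' = ((Mb β).trace).re := by
    intro β
    unfold prob
    rw [htr β]
  have htrM : ∀ β, (Mb β).trace = ((prob (outer (w β)) ρ' : ℝ) : ℂ) := by
    intro β
    rw [hprob' β]
    exact nonneg_c_eq_re (psd_trace_nonneg (hMpsd β))
  have hp'nn : ∀ β, 0 ≤ prob (outer (w β)) ρ' := by
    intro β
    rw [hprob' β]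
    exact (Complex.nonneg_iff.mp (psd_trace_nonneg (hMpsd β))).1
  have hMzero : ∀ β, prob (outer (w β)) ρ' = 0 → Mb β = 0 := by
    intro β h
    exact psd_trace_zero (hMpsd β) (by rw [htrM β, h]; simp)
  have hgroup : ∀ j, ∑ a, Mb (e0 (a, j))
      = trA ((P j ⊗ₖ (1 : Matrix (Fin n) (Fin n) ℂ)) * ρ) := by
    intro j
    ext c c'
    rw [Matrix.sum_apply]
    have h1 : ∀ a, Mb (e0 (a, j)) c c'
        = ∑ i, ∑ i', Q j a i * ρ (i, c) (i', c') * star (Q j a i') := by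
      intro a
      show ρ' (e0 (a, j), c) (e0 (a, j), c') = _
      rw [hρ'def, sandwich_apply]
      exact Finset.sum_congr rfl fun i _ => Finset.sum_congr rfl fun i' _ => by
        rw [hVe, hVe]
    calc ∑ a, Mb (e0 (a, j)) c c'
        = ∑ a, ∑ i, ∑ i', Q j a i * ρ (i, c) (i', c') * star (Q j a i') :=
          Finset.sum_congr rfl fun a _ => h1 a
      _ = trA ((((Q j)ᴴ * Q j) ⊗ₖ (1 : Matrix (Fin n) (Fin n) ℂ)) * ρ) c c' :=
          group_sum (Q j) ρ c c'
      _ = trA ((P j ⊗ₖ (1 : Matrix (Fin n) (Fin n) ℂ)) * ρ) c c' := by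
          rw [hQh, hQ]
  have hpgroup : ∀ j, prob (P j) ρ = ∑ a, prob (outer (w (e0 (a, j)))) ρ' := by
    intro j
    unfold prob
    have h1 : ((P j ⊗ₖ (1 : Matrix (Fin n) (Fin n) ℂ)) * ρ).trace
        = ∑ a, ((outer (w (e0 (a, j))) ⊗ₖ (1 : Matrix (Fin n) (Fin n) ℂ)) * ρ').trace := by
      rw [← trace_trA ((P j ⊗ₖ (1 : Matrix (Fin n) (Fin n) ℂ)) * ρ), ← hgroup j,
        Matrix.trace_sum]
      exact Finset.sum_congr rfl fun a _ => (htr _).symm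
    rw [h1, Complex.re_sum]
  have htrAeq : trA ρ' = trA ρ := by
    rw [hρ'def]
    exact trA_sandwich V hVV ρ
  have htrBpsd : (trB ρ).PosSemidef := trB_posSemidef hρPSD
  have hS1 : S (Fin (m * k) × Fin n) ρ' = S (Fin m × Fin n) ρ := by
    rw [hρ'def]
    exact S_iso S hspec (V ⊗ₖ (1 : Matrix (Fin n) (Fin n) ℂ)) hBB hρPSD
  have hS2 : S (Fin (m * k)) (trB ρ') = S (Fin m) (trB ρ) := by
    rw [hρ'def, trB_sandwich]
    exact S_iso S hspec V hVV htrBpsd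
  have hcondB' : ∀ β, condB (outer (w β)) ρ'
      = (((prob (outer (w β)) ρ')⁻¹ : ℝ) : ℂ) • Mb β := by
    intro β
    unfold condB
    rw [htrA' β]
  have hσdens : ∀ β, prob (outer (w β)) ρ' ≠ 0 → IsDensity (condB (outer (w β)) ρ') := by
    intro β hβ
    have hpos : 0 < prob (outer (w β)) ρ' := lt_of_le_of_ne (hp'nn β) (Ne.symm hβ)
    constructor
    · rw [hcondB' β]
      exact psd_smul_real (hMpsd β) (inv_nonneg.mpr hpos.le)
    · rw [hcondB' β, Matrix.trace_smul, htrM β, smul_eq_mul, ← Complex.ofReal_mul,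
        inv_mul_cancel₀ hβ, Complex.ofReal_one]
  have hpjnn : ∀ j, 0 ≤ prob (P j) ρ := by
    intro j
    rw [hpgroup j]
    exact Finset.sum_nonneg fun a _ => hp'nn _
  have hcondBj : ∀ j, condB (P j) ρ
      = (((prob (P j) ρ)⁻¹ : ℝ) : ℂ) • ∑ a, Mb (e0 (a, j)) := by
    intro j
    unfold condB
    rw [← hgroup j]
  have hcondTr : ∀ j, prob (P j) ρ ≠ 0 → IsDensity (condB (P j) ρ) := by
    intro j hj
    have hpos : 0 < prob (P j) ρ := lt_of_le_of_ne (hpjnn j) (Ne.symm hj)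
    constructor
    · rw [hcondBj j]
      refine psd_smul_real ?_ (inv_nonneg.mpr hpos.le)
      exact Finset.sum_induction _ _ (fun a b ha hb => ha.add hb) Matrix.PosSemidef.zero
        (fun a _ => hMpsd _)
    · rw [hcondBj j, Matrix.trace_smul, Matrix.trace_sum]
      have h2 : ∑ a, (Mb (e0 (a, j))).trace = ((prob (P j) ρ : ℝ) : ℂ) := by
        rw [hpgroup j, Complex.ofReal_sum]
        exact Finset.sum_congr rfl fun a _ => htrM _
      rw [h2, smul_eq_mul, ← Complex.ofReal_mul, inv_mul_cancel₀ hj, Complex.ofReal_one]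
  -- key per-outcome inequality
  have hkey : ∀ j, prob (P j) ρ ≠ 0 →
      ∑ a, (if prob (outer (w (e0 (a, j)))) ρ' ≠ 0
        then prob (outer (w (e0 (a, j)))) ρ' * S (Fin n) (condB (outer (w (e0 (a, j)))) ρ')
        else 0)
      ≤ prob (P j) ρ * S (Fin n) (condB (P j) ρ) := by
    intro j hj
    have hpos : 0 < prob (P j) ρ := lt_of_le_of_ne (hpjnn j) (Ne.symm hj)
    set q : Fin m → ℝ := fun a => prob (outer (w (e0 (a, j)))) ρ' / prob (P j) ρ with hqdef
    set τ : Fin m → Matrix (Fin n) (Fin n) ℂ := fun a =>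
      if prob (outer (w (e0 (a, j)))) ρ' = 0 then condB (P j) ρ
      else condB (outer (w (e0 (a, j)))) ρ' with hτdef
    have hq0 : ∀ a, 0 ≤ q a := fun a => div_nonneg (hp'nn _) hpos.le
    have hq1 : ∑ a, q a = 1 := by
      rw [hqdef]
      simp only
      rw [← Finset.sum_div, ← hpgroup j, div_self hj]
    have hτd : ∀ a, IsDensity (τ a) := by
      intro a
      rw [hτdef]
      by_cases h : prob (outer (w (e0 (a, j)))) ρ' = 0
      · simp only [if_pos h]
        exact hcondTr j hj
      · simp only [if_neg h]
        exact hσdens _ h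
    have hmix : ∑ a, (q a : ℂ) • τ a = condB (P j) ρ := by
      have hterm : ∀ a, (q a : ℂ) • τ a
          = (((prob (P j) ρ)⁻¹ : ℝ) : ℂ) • Mb (e0 (a, j)) := by
        intro a
        by_cases h : prob (outer (w (e0 (a, j)))) ρ' = 0
        · rw [hMzero _ h, hqdef]
          simp [h]
        · rw [hτdef]
          simp only [if_neg h]
          rw [hcondB' _, smul_smul, hqdef]
          simp only
          rw [← Complex.ofReal_mul]
          congr 1
          field_simp
      rw [Finset.sum_congr rfl fun a _ => hterm a, ← Finset.smul_sum, hcondBj j]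
    have hc := hconc (Fin n) m q τ hq0 hq1 hτd
    rw [hmix] at hc
    have hc2 := mul_le_mul_of_nonneg_left hc hpos.le
    rw [Finset.mul_sum] at hc2
    calc ∑ a, (if prob (outer (w (e0 (a, j)))) ρ' ≠ 0
          then prob (outer (w (e0 (a, j)))) ρ' * S (Fin n) (condB (outer (w (e0 (a, j)))) ρ')
          else 0)
        = ∑ a, prob (P j) ρ * (q a * S (Fin n) (τ a)) := by
          refine Finset.sum_congr rfl fun a _ => ?_
          by_cases h : prob (outer (w (e0 (a, j)))) ρ' = 0
          · simp [h, hqdef]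
          · rw [if_pos h, hτdef]
            simp only [if_neg h, hqdef]
            field_simp
      _ ≤ prob (P j) ρ * S (Fin n) (condB (P j) ρ) := hc2
  -- sum comparison
  have hsum : ∑ β ∈ Finset.univ.filter (fun β => prob (outer (w β)) ρ' ≠ 0),
        prob (outer (w β)) ρ' * S (Fin n) (condB (outer (w β)) ρ')
      ≤ ∑ j ∈ Finset.univ.filter (fun j => prob (P j) ρ ≠ 0),
        prob (P j) ρ * S (Fin n) (condB (P j) ρ) := by
    rw [Finset.sum_filter, Finset.sum_filter]
    rw [← Equiv.sum_comp e0 (fun β => if prob (outer (w β)) ρ' ≠ 0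
      then prob (outer (w β)) ρ' * S (Fin n) (condB (outer (w β)) ρ') else 0)]
    rw [Fintype.sum_prod_type]
    rw [Finset.sum_comm]
    refine Finset.sum_le_sum fun j _ => ?_
    by_cases hj : prob (P j) ρ ≠ 0
    · rw [if_pos hj]
      exact hkey j hj
    · push_neg at hj
      rw [if_neg (by simpa using hj)]
      have hall : ∀ a, prob (outer (w (e0 (a, j)))) ρ' = 0 := by
        have h0 : ∑ a, prob (outer (w (e0 (a, j)))) ρ' = 0 := by rw [← hpgroup j, hj]
        intro a
        exact (Finset.sum_eq_zero_iff_of_nonneg fun a _ => hp'nn _).mp h0 a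
          (Finset.mem_univ a)
      rw [Finset.sum_eq_zero fun a _ => by rw [if_neg (by simp [hall a])]]
  -- apply the projective hypothesis
  have hmain := hproj (m * k) n ρ' ⟨hρ'psd, hρ'tr⟩ w hw
  have hW : holevoB S (fun β => outer (w β)) ρ'
      = S (Fin n) (trA ρ') - ∑ β ∈ Finset.univ.filter (fun β => prob (outer (w β)) ρ' ≠ 0),
          prob (outer (w β)) ρ' * S (Fin n) (condB (outer (w β)) ρ') := rfl
  have hH : holevoB S P ρ
      = S (Fin n) (trA ρ) - ∑ j ∈ Finset.univ.filter (fun j => prob (P j) ρ ≠ 0),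
          prob (P j) ρ * S (Fin n) (condB (P j) ρ) := rfl
  rw [hW, htrAeq] at hmain
  rw [hH]
  rw [hS1, hS2] at hmain
  linarith [hsum]
end
end

section
/- Let φ, ψ be unit vectors in ℂ^n, ρ = φφᴴ, σ = ψψᴴ, let 𝓔 be a quantum channel given by Kraus operators, and let q ≥ 1 be a real number. Then ∑_i |λ_i(ρ − σ)|^q ≥ ∑_i |μ_i(𝓔(ρ) − 𝓔(σ))|^q, where λ_i(·) and μ_i(·) denote the eigenvalues of the Hermitian matrices ρ − σ and 𝓔(ρ) − 𝓔(σ) respectively, and the powers are real powers of the absolute values. -/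
open scoped Kronecker
open Finset Matrix
open scoped ComplexOrder

noncomputable section

section Helpers

lemma trace_diagonal_mul' {m : Type*} [Fintype m] [DecidableEq m]
    (d : m → ℂ) (B : Matrix m m ℂ) :
    (Matrix.diagonal d * B).trace = ∑ i, d i * B i i := by
  simp [Matrix.trace, Matrix.diag, Matrix.mul_apply, Matrix.diagonal, Matrix.of_apply, ite_mul]

lemma psd_diag_re_nonneg {m : Type*} [Fintype m] [DecidableEq m]
    {N : Matrix m m ℂ} (hN : N.PosSemidef) (i : m) : 0 ≤ (N i i).re := by
  have h := hN.dotProduct_mulVec_nonneg (Pi.single i 1)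
  have heq : dotProduct (star (Pi.single i 1)) (N *ᵥ Pi.single i 1) = N i i := by
    simp [Matrix.mulVec_single, dotProduct, Pi.single_apply, apply_ite (star : ℂ → ℂ)]
  rw [heq] at h
  exact (Complex.le_def.mp h).1

lemma trace_mul_eq_sum_eigen {m : Type*} [Fintype m] [DecidableEq m]
    {Z : Matrix m m ℂ} (hZ : Z.IsHermitian) (M : Matrix m m ℂ) :
    (Z * M).trace = ∑ i, (hZ.eigenvalues i : ℂ) *
      ((star (hZ.eigenvectorUnitary : Matrix m m ℂ) * M *
        (hZ.eigenvectorUnitary : Matrix m m ℂ)) i i) := by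
  set U : Matrix m m ℂ := (hZ.eigenvectorUnitary : Matrix m m ℂ)
  set D : Matrix m m ℂ := Matrix.diagonal (RCLike.ofReal ∘ hZ.eigenvalues)
  have h1 : (Z * M).trace = (D * (star U * M * U)).trace := by
    conv_lhs => rw [hZ.spectral_theorem, Unitary.conjStarAlgAut_apply]
    rw [mul_assoc U D, mul_assoc U, Matrix.trace_mul_comm]
    simp only [mul_assoc]
    rfl
  rw [h1, trace_diagonal_mul']
  rfl

lemma star_mul_self_unit {m : Type*} [Fintype m] [DecidableEq m]
    {Z : Matrix m m ℂ} (hZ : Z.IsHermitian) :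
    star (hZ.eigenvectorUnitary : Matrix m m ℂ) * (hZ.eigenvectorUnitary : Matrix m m ℂ) = 1 :=
  Unitary.coe_star_mul_self hZ.eigenvectorUnitary

lemma mul_star_self_unit {m : Type*} [Fintype m] [DecidableEq m]
    {Z : Matrix m m ℂ} (hZ : Z.IsHermitian) :
    (hZ.eigenvectorUnitary : Matrix m m ℂ) * star (hZ.eigenvectorUnitary : Matrix m m ℂ) = 1 :=
  Unitary.coe_mul_star_self hZ.eigenvectorUnitary

lemma sum_eigenvalues_eq_trace' {m : Type*} [Fintype m] [DecidableEq m]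
    {Z : Matrix m m ℂ} (hZ : Z.IsHermitian) :
    Z.trace = ((∑ i, hZ.eigenvalues i : ℝ) : ℂ) := by
  have h := trace_mul_eq_sum_eigen hZ 1
  rw [mul_one] at h
  rw [h]
  have h2 : star (hZ.eigenvectorUnitary : Matrix m m ℂ) * 1 *
      (hZ.eigenvectorUnitary : Matrix m m ℂ) = 1 := by
    rw [mul_one, star_mul_self_unit hZ]
  rw [h2]
  push_cast
  simp [Matrix.one_apply]

lemma exists_test_matrix {m : Type*} [Fintype m] [DecidableEq m]
    {Y : Matrix m m ℂ} (hY : Y.IsHermitian) (c : m → ℝ)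
    (h0 : ∀ i, 0 ≤ c i) (h1 : ∀ i, c i ≤ 1) :
    ∃ M : Matrix m m ℂ, M.PosSemidef ∧ (1 - M).PosSemidef ∧
      ((Y * M).trace).re = ∑ i, hY.eigenvalues i * c i := by
  set V : Matrix m m ℂ := (hY.eigenvectorUnitary : Matrix m m ℂ) with hV
  have hVV : star V * V = 1 := star_mul_self_unit hY
  have hVV' : V * star V = 1 := mul_star_self_unit hY
  set Dc : Matrix m m ℂ := Matrix.diagonal (fun i => (c i : ℂ)) with hDc
  have hDcPSD : Dc.PosSemidef := Matrix.PosSemidef.diagonal (by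
    intro i
    exact Complex.zero_le_real.mpr (h0 i))
  refine ⟨V * Dc * star V, ?_, ?_, ?_⟩
  · have := hDcPSD.mul_mul_conjTranspose_same V
    rwa [← Matrix.star_eq_conjTranspose] at this
  · have hsub : (1 : Matrix m m ℂ) - V * Dc * star V = V * (1 - Dc) * star V := by
      rw [Matrix.mul_sub, Matrix.sub_mul, mul_one, hVV']
    rw [hsub]
    have h1Dc : (1 : Matrix m m ℂ) - Dc = Matrix.diagonal (fun i => ((1 - c i : ℝ) : ℂ)) := by
      rw [hDc, ← Matrix.diagonal_one, Matrix.diagonal_sub]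
      congr 1; ext i; push_cast; ring
    rw [h1Dc]
    have hpsd : (Matrix.diagonal (fun i => ((1 - c i : ℝ) : ℂ))).PosSemidef :=
      Matrix.PosSemidef.diagonal (by
        intro i
        exact Complex.zero_le_real.mpr (by linarith [h1 i]))
    have := hpsd.mul_mul_conjTranspose_same V
    rwa [← Matrix.star_eq_conjTranspose] at this
  · rw [trace_mul_eq_sum_eigen hY]
    have hN : star V * (V * Dc * star V) * V = Dc := by
      calc star V * (V * Dc * star V) * V
          = (star V * V) * Dc * (star V * V) := by simp only [mul_assoc]
        _ = Dc := by rw [hVV, one_mul, mul_one]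
    rw [show (star (hY.eigenvectorUnitary : Matrix m m ℂ) : Matrix m m ℂ) = star V from rfl] at *
    rw [hN]
    rw [Complex.re_sum]
    refine Finset.sum_congr rfl fun i _ => ?_
    simp [hDc, Matrix.diagonal_apply_eq, Complex.re_ofReal_mul]

lemma outer_isHermitian {d : Type} (v : d → ℂ) : (outer v).IsHermitian := by
  ext i j
  simp [outer, Matrix.conjTranspose_apply, Matrix.vecMulVec_apply, mul_comm]

lemma channel_isHermitian {n r t : ℕ} (K : Fin t → Matrix (Fin r) (Fin n) ℂ)
    {X : Matrix (Fin n) (Fin n) ℂ} (hX : X.IsHermitian) :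
    (channel K X).IsHermitian := by
  have h : ∀ i : Fin t, (K i * X * (K i)ᴴ)ᴴ = K i * X * (K i)ᴴ := by
    intro i
    calc (K i * X * (K i)ᴴ)ᴴ = K i * (Xᴴ * (K i)ᴴ) := by
          simp [Matrix.conjTranspose_mul]
      _ = K i * X * (K i)ᴴ := by rw [hX.eq, Matrix.mul_assoc]
  show (∑ i, K i * X * (K i)ᴴ)ᴴ = _
  rw [Matrix.conjTranspose_sum]
  exact Finset.sum_congr rfl fun i _ => h i

lemma channel_sub {n r t : ℕ} (K : Fin t → Matrix (Fin r) (Fin n) ℂ)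
    (A B : Matrix (Fin n) (Fin n) ℂ) :
    channel K A - channel K B = channel K (A - B) := by
  unfold channel
  rw [← Finset.sum_sub_distrib]
  congr 1; ext i
  simp [Matrix.sub_mul, Matrix.mul_sub]

lemma trace_outer {d : Type} [Fintype d] (v : d → ℂ) (hv : UnitVec v) :
    (outer v).trace = 1 := by
  have h : ∀ i, v i * star (v i) = ((‖v i‖ ^ 2 : ℝ) : ℂ) := by
    intro i
    rw [RCLike.star_def, Complex.mul_conj]
    simp [Complex.normSq_eq_norm_sq]
  have h2 : (outer v).trace = ((∑ i, ‖v i‖ ^ 2 : ℝ) : ℂ) := by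
    simp only [Matrix.trace, Matrix.diag, outer, Matrix.vecMulVec_apply, Pi.star_apply, h]
    push_cast
    rfl
  rw [h2, hv, Complex.ofReal_one]

lemma trace_channel_mul {n r t : ℕ} (K : Fin t → Matrix (Fin r) (Fin n) ℂ)
    (X : Matrix (Fin n) (Fin n) ℂ) (M : Matrix (Fin r) (Fin r) ℂ) :
    (channel K X * M).trace = (X * ∑ i, (K i)ᴴ * M * K i).trace := by
  rw [Matrix.mul_sum, Matrix.trace_sum, channel, Finset.sum_mul, Matrix.trace_sum]
  refine Finset.sum_congr rfl fun i _ => ?_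
  calc (K i * X * (K i)ᴴ * M).trace = (K i * (X * ((K i)ᴴ * M))).trace := by
        simp only [Matrix.mul_assoc]
    _ = ((X * ((K i)ᴴ * M)) * K i).trace := Matrix.trace_mul_comm _ _
    _ = (X * ((K i)ᴴ * M * K i)).trace := by simp only [Matrix.mul_assoc]

lemma posSemidef_sum' {m k : Type*} [Fintype m] [Fintype k]
    (f : k → Matrix m m ℂ) (hf : ∀ i, (f i).PosSemidef) :
    (∑ i, f i).PosSemidef := by
  classical
  exact Finset.sum_induction f _ (fun a b ha hb => ha.add hb) Matrix.PosSemidef.zero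
    fun i _ => hf i

lemma rank_outer_le {d : Type} [Fintype d] [DecidableEq d] (v : d → ℂ) :
    (outer v).rank ≤ 1 := by
  rw [Matrix.rank]
  have hr : LinearMap.range (outer v).mulVecLin ≤ Submodule.span ℂ {v} := by
    rintro x ⟨y, rfl⟩
    have h : (outer v).mulVecLin y = (dotProduct (star v) y) • v := by
      ext i
      simp only [Matrix.mulVecLin_apply, Matrix.mulVec, dotProduct, outer,
        Matrix.vecMulVec_apply, Pi.smul_apply, smul_eq_mul, Pi.star_apply, Finset.sum_mul]
      exact Finset.sum_congr rfl fun j _ => by ring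
    rw [h]
    exact Submodule.smul_mem _ _ (Submodule.mem_span_singleton_self v)
  refine le_trans (Submodule.finrank_mono hr) ?_
  by_cases hv : v = 0
  · subst hv
    rw [Submodule.span_zero_singleton]
    simp
  · rw [finrank_span_singleton hv]

lemma matrix_rank_add_le' {d : Type} [Fintype d] [DecidableEq d]
    (A B : Matrix d d ℂ) : (A + B).rank ≤ A.rank + B.rank := by
  rw [Matrix.rank, Matrix.rank, Matrix.rank]
  have h : LinearMap.range (A + B).mulVecLin ≤
      LinearMap.range A.mulVecLin ⊔ LinearMap.range B.mulVecLin := by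
    rintro x ⟨y, rfl⟩
    have h2 : (A + B).mulVecLin y = A.mulVecLin y + B.mulVecLin y := by
      simp [Matrix.mulVecLin_apply, Matrix.add_mulVec]
    rw [h2]
    exact Submodule.add_mem_sup ⟨y, rfl⟩ ⟨y, rfl⟩
  refine le_trans (Submodule.finrank_mono h) ?_
  have := Submodule.finrank_sup_add_finrank_inf_eq
    (LinearMap.range A.mulVecLin) (LinearMap.range B.mulVecLin)
  omega

lemma matrix_rank_neg' {d : Type} [Fintype d] [DecidableEq d]
    (B : Matrix d d ℂ) : (-B).rank = B.rank := by
  rw [Matrix.rank, Matrix.rank]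
  have h : (-B).mulVecLin = -(B.mulVecLin) := by
    ext y
    simp [Matrix.mulVecLin_apply, Matrix.neg_mulVec]
  rw [h, LinearMap.range_neg]

end Helpers

/-- for pure states `ρ, σ` and `q ≥ 1`,
`Tr|ρ − σ|^q ≥ Tr|𝓔(ρ) − 𝓔(σ)|^q`. -/
theorem schatten_power_contraction_pure
    (n r t : ℕ) (φ ψ : Fin n → ℂ) (hφ : UnitVec φ) (hψ : UnitVec ψ)
    (K : Fin t → Matrix (Fin r) (Fin n) ℂ) (hK : IsKraus K)
    (q : ℝ) (hq : 1 ≤ q) :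
    ∑ i, |eigs (channel K (outer φ) - channel K (outer ψ)) i| ^ q ≤
      ∑ i, |eigs (outer φ - outer ψ) i| ^ q := by
  classical
  have hq0 : q ≠ 0 := by linarith
  have hX : (outer φ - outer ψ).IsHermitian :=
    ((outer_isHermitian φ).sub (outer_isHermitian ψ))
  have hY : (channel K (outer φ) - channel K (outer ψ)).IsHermitian := by
    rw [channel_sub]
    exact channel_isHermitian K hX
  set lam : Fin n → ℝ := hX.eigenvalues with hlam
  set mu : Fin r → ℝ := hY.eigenvalues with hmu
  have heigsX : eigs (outer φ - outer ψ) = lam := dif_pos hX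
  have heigsY : eigs (channel K (outer φ) - channel K (outer ψ)) = mu := dif_pos hY
  rw [heigsX, heigsY]
  -- trace of X is zero
  have htrX : (outer φ - outer ψ).trace = 0 := by
    rw [Matrix.trace_sub, trace_outer φ hφ, trace_outer ψ hψ, sub_self]
  have hsumlam : ∑ i, lam i = 0 := by
    have h := sum_eigenvalues_eq_trace' hX
    rw [htrX] at h
    exact_mod_cast h.symm
  -- rank of X at most two
  have hrank : (outer φ - outer ψ).rank ≤ 2 := by
    rw [sub_eq_add_neg]
    refine le_trans (matrix_rank_add_le' _ _) ?_
    have h1 := rank_outer_le φ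
    have h2 := rank_outer_le ψ
    have h3 := matrix_rank_neg' (outer ψ)
    omega
  have hcard : (Finset.univ.filter fun i => lam i ≠ 0).card ≤ 2 := by
    have h1 := hX.rank_eq_card_non_zero_eigs
    have h2 : Fintype.card {i // lam i ≠ 0} =
        (Finset.univ.filter fun i => lam i ≠ 0).card := Fintype.card_subtype _
    rw [h1] at hrank
    rw [← h2]
    exact_mod_cast hrank
  -- spectrum structure
  obtain ⟨a, ha0, hbound, hRHS⟩ :
      ∃ a : ℝ, 0 ≤ a ∧
        (∀ c : Fin n → ℝ, (∀ i, 0 ≤ c i) → (∀ i, c i ≤ 1) → |∑ i, lam i * c i| ≤ a) ∧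
        ∑ i, |lam i| ^ q = 2 * a ^ q := by
    set s := Finset.univ.filter (fun i => lam i ≠ 0) with hs
    have hzero : ∀ i, i ∉ s → lam i = 0 := by
      intro i hi
      by_contra h
      exact hi (Finset.mem_filter.mpr ⟨Finset.mem_univ i, h⟩)
    by_cases hse : s = ∅
    · have hz : ∀ i, lam i = 0 := fun i => hzero i (by simp [hse])
      refine ⟨0, le_refl 0, ?_, ?_⟩
      · intro c h0 h1
        simp [hz]
      · simp [hz, Real.zero_rpow hq0]
    · have h1c : 1 ≤ s.card := Finset.card_pos.mpr (Finset.nonempty_of_ne_empty hse)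
      have hsub : ∑ i ∈ s, lam i = ∑ i, lam i :=
        Finset.sum_subset (Finset.subset_univ s) (fun i _ h => hzero i h)
      have hc12 : s.card = 1 ∨ s.card = 2 := by omega
      rcases hc12 with hc | hc
      · exfalso
        obtain ⟨i₀, hi⟩ := Finset.card_eq_one.mp hc
        have hmem : i₀ ∈ s := by simp [hi]
        have : lam i₀ = 0 := by
          rw [hi, Finset.sum_singleton, hsumlam] at hsub
          exact hsub
        exact (Finset.mem_filter.mp hmem).2 this
      · obtain ⟨i₀, i₁, hne, hs2⟩ := Finset.card_eq_two.mp hc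
        have hsum2 : lam i₀ + lam i₁ = 0 := by
          rw [hs2, Finset.sum_pair hne, hsumlam] at hsub
          exact hsub
        have hi₀ : lam i₀ ≠ 0 := by
          have hmem : i₀ ∈ s := by simp [hs2]
          exact (Finset.mem_filter.mp hmem).2
        have hzero' : ∀ i, i ≠ i₀ → i ≠ i₁ → lam i = 0 := by
          intro i h0 h1
          exact hzero i (by simp [hs2, h0, h1])
        obtain ⟨j₀, j₁, hjne, hj0pos, hj1, hjzero⟩ :
            ∃ j₀ j₁, j₀ ≠ j₁ ∧ 0 < lam j₀ ∧ lam j₁ = -lam j₀ ∧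
              ∀ i, i ≠ j₀ → i ≠ j₁ → lam i = 0 := by
          rcases hi₀.lt_or_gt with hneg | hpos
          · exact ⟨i₁, i₀, hne.symm, by linarith, by linarith,
              fun i h0 h1 => hzero' i h1 h0⟩
          · exact ⟨i₀, i₁, hne, hpos, by linarith, hzero'⟩
        refine ⟨lam j₀, le_of_lt hj0pos, ?_, ?_⟩
        · intro c h0 h1
          have he : ∑ i, lam i * c i = lam j₀ * c j₀ + lam j₁ * c j₁ := by
            rw [← Finset.sum_subset (Finset.subset_univ {j₀, j₁}) ?h, Finset.sum_pair hjne]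
            case h =>
              intro i _ hi
              simp only [Finset.mem_insert, Finset.mem_singleton, not_or] at hi
              rw [hjzero i hi.1 hi.2, zero_mul]
          rw [he, hj1]
          have hc00 := h0 j₀
          have hc01 := h1 j₀
          have hc10 := h0 j₁
          have hc11 := h1 j₁
          rw [abs_le]
          constructor <;> nlinarith
        · have hz : ∀ i, i ≠ j₀ → i ≠ j₁ → |lam i| ^ q = 0 := by
            intro i h h'
            rw [hjzero i h h', abs_zero, Real.zero_rpow hq0]
          rw [← Finset.sum_subset (Finset.subset_univ {j₀, j₁}) ?h, Finset.sum_pair hjne]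
          case h =>
            intro i _ hi
            simp only [Finset.mem_insert, Finset.mem_singleton, not_or] at hi
            exact hz i hi.1 hi.2
          rw [hj1, abs_neg, abs_of_pos hj0pos]
          ring
  -- master bound through the channel
  have hmaster : ∀ M : Matrix (Fin r) (Fin r) ℂ, M.PosSemidef →
      ((1 : Matrix (Fin r) (Fin r) ℂ) - M).PosSemidef →
      |((channel K (outer φ - outer ψ) * M).trace).re| ≤ a := by
    intro M hM h1M
    set M' : Matrix (Fin n) (Fin n) ℂ := ∑ i, (K i)ᴴ * M * K i with hM'
    have hM'PSD : M'.PosSemidef :=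
      posSemidef_sum' _ (fun i => hM.conjTranspose_mul_mul_same (K i))
    have h1M' : ((1 : Matrix (Fin n) (Fin n) ℂ) - M').PosSemidef := by
      have heq : (1 : Matrix (Fin n) (Fin n) ℂ) - M' = ∑ i, (K i)ᴴ * (1 - M) * K i := by
        have : ∑ i, (K i)ᴴ * (1 - M) * K i
            = ∑ i, ((K i)ᴴ * K i - (K i)ᴴ * M * K i) := by
          refine Finset.sum_congr rfl fun i _ => ?_
          rw [Matrix.mul_sub, Matrix.sub_mul, Matrix.mul_one]
        rw [this, Finset.sum_sub_distrib, hK, hM']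
      rw [heq]
      exact posSemidef_sum' _ (fun i => h1M.conjTranspose_mul_mul_same (K i))
    rw [trace_channel_mul, ← hM', trace_mul_eq_sum_eigen hX M']
    set U : Matrix (Fin n) (Fin n) ℂ := (hX.eigenvectorUnitary : Matrix (Fin n) (Fin n) ℂ)
      with hU
    set N : Matrix (Fin n) (Fin n) ℂ := star U * M' * U with hN
    have hNPSD : N.PosSemidef := by
      have := hM'PSD.conjTranspose_mul_mul_same U
      rwa [← Matrix.star_eq_conjTranspose] at this
    have h1N : ((1 : Matrix (Fin n) (Fin n) ℂ) - N).PosSemidef := by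
      have heq : (1 : Matrix (Fin n) (Fin n) ℂ) - N = star U * (1 - M') * U := by
        rw [Matrix.mul_sub, Matrix.sub_mul, Matrix.mul_one, star_mul_self_unit hX, hN]
      rw [heq]
      have := h1M'.conjTranspose_mul_mul_same U
      rwa [← Matrix.star_eq_conjTranspose] at this
    rw [Complex.re_sum]
    simp only [Complex.re_ofReal_mul]
    refine hbound (fun i => (N i i).re) (fun i => psd_diag_re_nonneg hNPSD i) (fun i => ?_)
    have h := psd_diag_re_nonneg h1N i
    have heq : ((1 : Matrix (Fin n) (Fin n) ℂ) - N) i i = 1 - N i i := by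
      simp [Matrix.sub_apply, Matrix.one_apply_eq]
    rw [heq, Complex.sub_re, Complex.one_re] at h
    linarith
  -- bound for output eigenvalues
  have hYbound : ∀ c : Fin r → ℝ, (∀ i, 0 ≤ c i) → (∀ i, c i ≤ 1) →
      |∑ i, mu i * c i| ≤ a := by
    intro c h0 h1
    obtain ⟨M, hM, h1M, htr⟩ := exists_test_matrix hY c h0 h1
    calc |∑ i, mu i * c i|
        = |(((channel K (outer φ) - channel K (outer ψ)) * M).trace).re| := by rw [htr]
      _ = |((channel K (outer φ - outer ψ) * M).trace).re| := by
          rw [channel_sub K (outer φ) (outer ψ)]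
      _ ≤ a := hmaster M hM h1M
  have hmax : ∀ j, |mu j| ≤ a := by
    intro j
    have h := hYbound (fun i => if i = j then 1 else 0)
      (fun i => by positivity) (fun i => by split <;> norm_num)
    simpa [mul_ite, mul_one, mul_zero, Finset.sum_ite_eq'] using h
  have hplus : ∑ i, max (mu i) 0 ≤ a := by
    have h := hYbound (fun i => if 0 < mu i then 1 else 0)
      (fun i => by positivity) (fun i => by split <;> norm_num)
    have he : ∑ i, mu i * (if 0 < mu i then 1 else 0) = ∑ i, max (mu i) 0 := by
      refine Finset.sum_congr rfl fun i _ => ?_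
      by_cases hi : 0 < mu i
      · simp [hi, max_eq_left hi.le]
      · simp [hi, max_eq_right (not_lt.mp hi)]
    rw [he] at h
    exact le_trans (le_abs_self _) h
  have hminus : ∑ i, max (-(mu i)) 0 ≤ a := by
    have h := hYbound (fun i => if mu i < 0 then 1 else 0)
      (fun i => by positivity) (fun i => by split <;> norm_num)
    have he : ∑ i, mu i * (if mu i < 0 then 1 else 0) = -∑ i, max (-(mu i)) 0 := by
      rw [← Finset.sum_neg_distrib]
      refine Finset.sum_congr rfl fun i _ => ?_
      by_cases hi : mu i < 0
      · simp [hi, max_eq_left (by linarith : (0:ℝ) ≤ -mu i)]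
      · simp [hi, max_eq_right (by linarith [not_lt.mp hi] : -mu i ≤ 0)]
    rw [he, abs_neg] at h
    exact le_trans (le_abs_self _) h
  have hq1 : q - 1 + 1 = q := by ring
  calc ∑ i, |mu i| ^ q
      ≤ ∑ i, a ^ (q - 1) * |mu i| := by
        refine Finset.sum_le_sum fun i _ => ?_
        have habs : (0:ℝ) ≤ |mu i| := abs_nonneg _
        have h1 : |mu i| ^ q = |mu i| ^ (q - 1) * |mu i| := by
          conv_lhs => rw [← hq1]
          rw [Real.rpow_add' habs (by rw [hq1]; exact hq0), Real.rpow_one]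
        rw [h1]
        exact mul_le_mul_of_nonneg_right
          (Real.rpow_le_rpow habs (hmax i) (by linarith)) habs
    _ = a ^ (q - 1) * ∑ i, |mu i| := by rw [Finset.mul_sum]
    _ ≤ a ^ (q - 1) * (2 * a) := by
        refine mul_le_mul_of_nonneg_left ?_ (Real.rpow_nonneg ha0 _)
        have habs : ∀ i, |mu i| = max (mu i) 0 + max (-(mu i)) 0 := by
          intro i
          rcases le_total (mu i) 0 with h | h
          · rw [abs_of_nonpos h, max_eq_right h, max_eq_left (by linarith), zero_add]
          · rw [abs_of_nonneg h, max_eq_left h, max_eq_right (by linarith), add_zero]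
        calc ∑ i, |mu i| = ∑ i, max (mu i) 0 + ∑ i, max (-(mu i)) 0 := by
              rw [← Finset.sum_add_distrib]
              exact Finset.sum_congr rfl fun i _ => habs i
          _ ≤ a + a := add_le_add hplus hminus
          _ = 2 * a := by ring
    _ = 2 * a ^ q := by
        rw [show a ^ (q-1) * (2*a) = 2 * (a^(q-1) * a^(1:ℝ)) by rw [Real.rpow_one]; ring]
        rw [← Real.rpow_add' ha0 (by rw [hq1]; exact hq0), hq1]
    _ = ∑ i, |lam i| ^ q := hRHS.symm
end
end

section
/- Let φ, ψ be unit vectors in ℂ^n, ρ = φφᴴ, σ = ψψᴴ, and let 𝓔 be a quantum channel given by Kraus operators. Then the Hilbert–Schmidt distance contracts: Re Tr[(ρ − σ)²] ≥ Re Tr[(𝓔(ρ) − 𝓔(σ))²]. -/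
open scoped Kronecker
open Finset Matrix
open scoped ComplexOrder

noncomputable section

section HSaux

lemma hs_dot_conj {r : ℕ} (x y : Fin r → ℂ) :
    star y ⬝ᵥ x = starRingEnd ℂ (star x ⬝ᵥ y) := by
  simp [dotProduct, map_sum, mul_comm]

lemma hs_trace_outer' {r : ℕ} (x y : Fin r → ℂ) :
    (outer x * outer y).trace = (Complex.normSq (star x ⬝ᵥ y) : ℂ) := by
  have h : (outer x * outer y).trace = (star x ⬝ᵥ y) * (star y ⬝ᵥ x) := by
    simp only [outer, Matrix.trace, Matrix.diag, Matrix.mul_apply, vecMulVec_apply, Pi.star_apply,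
      dotProduct, Finset.sum_mul_sum]
    rw [Finset.sum_comm]
    congr 1; ext i; congr 1; ext j; ring
  rw [h, hs_dot_conj x y, Complex.mul_conj]

lemma hs_cs {r : ℕ} (x y : Fin r → ℂ) :
    Complex.normSq (star x ⬝ᵥ y) ≤ (star x ⬝ᵥ x).re * (star y ⬝ᵥ y).re := by
  have h := @inner_mul_inner_self_le ℂ _ _ _ _
    ((WithLp.equiv 2 _).symm x : EuclideanSpace ℂ (Fin r)) ((WithLp.equiv 2 _).symm y)
  simp only [WithLp.equiv_symm_apply, EuclideanSpace.inner_toLp_toLp,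
    dotProduct_comm _ (star _)] at h
  rw [hs_dot_conj x y, RCLike.norm_conj] at h
  calc Complex.normSq (star x ⬝ᵥ y) = ‖star x ⬝ᵥ y‖ * ‖star x ⬝ᵥ y‖ := by
        rw [Complex.normSq_eq_norm_sq, sq]
    _ ≤ _ := h

lemma hs_unit {n : ℕ} (x : Fin n → ℂ) (hx : UnitVec x) : star x ⬝ᵥ x = 1 := by
  have : star x ⬝ᵥ x = ((∑ i, ‖x i‖ ^ 2 : ℝ) : ℂ) := by
    push_cast
    simp [dotProduct, Complex.mul_conj', ← Complex.normSq_eq_norm_sq, mul_comm]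
  rw [this, hx]; norm_num

lemma hs_channel_outer {n r t : ℕ} (K : Fin t → Matrix (Fin r) (Fin n) ℂ) (x : Fin n → ℂ) :
    channel K (outer x) = ∑ i, outer (K i *ᵥ x) := by
  unfold channel outer
  congr 1; ext i a b
  simp only [Matrix.mul_apply, vecMulVec_apply, Pi.star_apply, mulVec, dotProduct,
    conjTranspose_apply, Finset.sum_mul, Finset.mul_sum, star_sum, star_mul', star_star]
  congr 1; ext c; congr 1; ext d; ring

lemma hs_sum_vecMul {n t : ℕ} (M : Fin t → Matrix (Fin n) (Fin n) ℂ) (v x : Fin n → ℂ) :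
    ∑ i, v ᵥ* (M i) ⬝ᵥ x = v ᵥ* (∑ i, M i) ⬝ᵥ x := by
  simp only [vecMul, dotProduct, Matrix.sum_apply, Finset.mul_sum, Finset.sum_mul]
  rw [Finset.sum_comm]
  exact Finset.sum_congr rfl fun j _ => Finset.sum_comm

lemma hs_kraus {n r t : ℕ} (K : Fin t → Matrix (Fin r) (Fin n) ℂ) (hK : IsKraus K)
    (x : Fin n → ℂ) : ∑ i, star (K i *ᵥ x) ⬝ᵥ (K i *ᵥ x) = star x ⬝ᵥ x := by
  have h1 : ∀ i, star (K i *ᵥ x) ⬝ᵥ (K i *ᵥ x) = star x ᵥ* ((K i)ᴴ * K i) ⬝ᵥ x := by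
    intro i
    rw [star_mulVec, dotProduct_mulVec, vecMul_vecMul]
  simp_rw [h1]
  rw [hs_sum_vecMul, hK, vecMul_one]

lemma hs_key {r t : ℕ} (a b : Fin t → Fin r → ℂ) (pa pb : ℝ)
    (ha : ∑ i, star (a i) ⬝ᵥ (a i) = (pa : ℂ)) (hb : ∑ i, star (b i) ⬝ᵥ (b i) = (pb : ℂ)) :
    ((((∑ i, outer (a i)) - ∑ i, outer (b i)) *
      ((∑ i, outer (a i)) - ∑ i, outer (b i))).trace).re ≤ pa ^ 2 + pb ^ 2 := by
  have expand : ∀ (u v : Fin t → Fin r → ℂ),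
      ((∑ i, outer (u i)) * (∑ i, outer (v i))).trace.re
        = ∑ i, ∑ j, Complex.normSq (star (u i) ⬝ᵥ (v j)) := by
    intro u v
    rw [Finset.sum_mul_sum]
    rw [Matrix.trace_sum]
    simp_rw [Matrix.trace_sum, hs_trace_outer']
    simp [Complex.re_sum]
  have hre : ∀ (u : Fin t → Fin r → ℂ) (p : ℝ), (∑ i, star (u i) ⬝ᵥ (u i) = (p : ℂ)) →
      ∑ i, (star (u i) ⬝ᵥ (u i)).re = p := by
    intro u p hp
    have := congrArg Complex.re hp
    simpa [Complex.re_sum] using this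
  have hPP : ((∑ i, outer (a i)) * (∑ i, outer (a i))).trace.re ≤ pa ^ 2 := by
    rw [expand]
    calc ∑ i, ∑ j, Complex.normSq (star (a i) ⬝ᵥ (a j))
        ≤ ∑ i, ∑ j, (star (a i) ⬝ᵥ (a i)).re * (star (a j) ⬝ᵥ (a j)).re := by
          refine Finset.sum_le_sum fun i _ => Finset.sum_le_sum fun j _ => hs_cs _ _
      _ = (∑ i, (star (a i) ⬝ᵥ (a i)).re) ^ 2 := by rw [sq, Finset.sum_mul_sum]
      _ = pa ^ 2 := by rw [hre a pa ha]
  have hQQ : ((∑ i, outer (b i)) * (∑ i, outer (b i))).trace.re ≤ pb ^ 2 := by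
    rw [expand]
    calc ∑ i, ∑ j, Complex.normSq (star (b i) ⬝ᵥ (b j))
        ≤ ∑ i, ∑ j, (star (b i) ⬝ᵥ (b i)).re * (star (b j) ⬝ᵥ (b j)).re := by
          refine Finset.sum_le_sum fun i _ => Finset.sum_le_sum fun j _ => hs_cs _ _
      _ = (∑ i, (star (b i) ⬝ᵥ (b i)).re) ^ 2 := by rw [sq, Finset.sum_mul_sum]
      _ = pb ^ 2 := by rw [hre b pb hb]
  have hPQ : 0 ≤ ((∑ i, outer (a i)) * (∑ i, outer (b i))).trace.re := by
    rw [expand]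
    exact Finset.sum_nonneg fun i _ => Finset.sum_nonneg fun j _ => Complex.normSq_nonneg _
  have hQP : 0 ≤ ((∑ i, outer (b i)) * (∑ i, outer (a i))).trace.re := by
    rw [expand]
    exact Finset.sum_nonneg fun i _ => Finset.sum_nonneg fun j _ => Complex.normSq_nonneg _
  rw [sub_mul, mul_sub, mul_sub, Matrix.trace_sub, Matrix.trace_sub, Matrix.trace_sub]
  simp only [Complex.sub_re]
  linarith

lemma hs_ident {n : ℕ} (x y : Fin n → ℂ) (a : ℂ) (b : ℝ)
    (hb : b ^ 2 = 1 - Complex.normSq a) :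
    outer (((1 + b : ℝ) : ℂ) • x - (starRingEnd ℂ a) • y)
      - outer (((1 + b : ℝ) : ℂ) • y - a • x)
      = ((2 * b * (1 + b) : ℝ) : ℂ) • (outer x - outer y) := by
  have h : a * starRingEnd ℂ a = 1 - ((b : ℂ)) ^ 2 := by
    rw [Complex.mul_conj]
    have : Complex.normSq a = 1 - b ^ 2 := by linarith
    rw [this]; push_cast; ring
  ext i j
  simp only [outer, vecMulVec_apply, Matrix.sub_apply, Matrix.smul_apply, Pi.star_apply,
    Pi.sub_apply, Pi.smul_apply, smul_eq_mul, star_sub, star_mul', star_star,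
    Complex.star_def, Complex.conj_ofReal]
  push_cast
  simp only [Complex.conj_conj]
  linear_combination -(x i * starRingEnd ℂ (x j) - y i * starRingEnd ℂ (y j)) * h

lemma hs_norm {n : ℕ} (x y : Fin n → ℂ) (hx : star x ⬝ᵥ x = 1) (hy : star y ⬝ᵥ y = 1)
    (b : ℝ) (hb : b ^ 2 = 1 - Complex.normSq (star x ⬝ᵥ y)) :
    star (((1 + b : ℝ) : ℂ) • x - (starRingEnd ℂ (star x ⬝ᵥ y)) • y)
      ⬝ᵥ (((1 + b : ℝ) : ℂ) • x - (starRingEnd ℂ (star x ⬝ᵥ y)) • y)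
      = ((2 * b ^ 2 * (1 + b) : ℝ) : ℂ) := by
  set a := star x ⬝ᵥ y with ha
  have hyx : star y ⬝ᵥ x = starRingEnd ℂ a := by
    simp [ha, dotProduct, map_sum, mul_comm]
  have h : a * starRingEnd ℂ a = 1 - ((b : ℂ)) ^ 2 := by
    rw [Complex.mul_conj]
    have : Complex.normSq a = 1 - b ^ 2 := by linarith
    rw [this]; push_cast; ring
  rw [star_sub, star_smul, star_smul, sub_dotProduct, dotProduct_sub, dotProduct_sub,
    smul_dotProduct, smul_dotProduct, smul_dotProduct, smul_dotProduct,
    dotProduct_smul, dotProduct_smul, dotProduct_smul, dotProduct_smul]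
  rw [← ha, hyx, hx, hy]
  simp only [smul_eq_mul, Complex.star_def, Complex.conj_ofReal, RingHom.id_apply,
    starRingEnd_self_apply, star_star]
  push_cast
  linear_combination -(2 * (b:ℂ) + 1) * h

lemma hs_channel_sub {n r t : ℕ} (K : Fin t → Matrix (Fin r) (Fin n) ℂ)
    (A B : Matrix (Fin n) (Fin n) ℂ) :
    channel K (A - B) = channel K A - channel K B := by
  unfold channel
  rw [← Finset.sum_sub_distrib]
  refine Finset.sum_congr rfl fun i _ => ?_
  rw [Matrix.mul_sub, Matrix.sub_mul]

lemma hs_channel_smul {n r t : ℕ} (K : Fin t → Matrix (Fin r) (Fin n) ℂ)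
    (c : ℂ) (A : Matrix (Fin n) (Fin n) ℂ) :
    channel K (c • A) = c • channel K A := by
  unfold channel
  rw [Finset.smul_sum]
  refine Finset.sum_congr rfl fun i _ => ?_
  rw [Matrix.mul_smul, Matrix.smul_mul]

end HSaux

/-- the Hilbert–Schmidt distance between pure states contracts
under quantum channels. -/
theorem hilbert_schmidt_contraction_pure
    (n r t : ℕ) (φ ψ : Fin n → ℂ) (hφ : UnitVec φ) (hψ : UnitVec ψ)
    (K : Fin t → Matrix (Fin r) (Fin n) ℂ) (hK : IsKraus K) :
    (((channel K (outer φ) - channel K (outer ψ)) *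
        (channel K (outer φ) - channel K (outer ψ))).trace).re ≤
      (((outer φ - outer ψ) * (outer φ - outer ψ)).trace).re := by
  have hφ1 : star φ ⬝ᵥ φ = 1 := hs_unit φ hφ
  have hψ1 : star ψ ⬝ᵥ ψ = 1 := hs_unit ψ hψ
  set a : ℂ := star φ ⬝ᵥ ψ with ha
  -- value of the RHS
  have hRHS : (((outer φ - outer ψ) * (outer φ - outer ψ)).trace).re
      = 2 - 2 * Complex.normSq a := by
    rw [sub_mul, mul_sub, mul_sub, Matrix.trace_sub, Matrix.trace_sub, Matrix.trace_sub,
      hs_trace_outer', hs_trace_outer', hs_trace_outer', hs_trace_outer',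
      hφ1, hψ1, hs_dot_conj φ ψ, ← ha, Complex.normSq_conj]
    simp [Complex.normSq_one]
    ring
  have hcs : Complex.normSq a ≤ 1 := by
    have h := hs_cs φ ψ
    rw [hφ1, hψ1, ← ha] at h
    simpa using h
  set β : ℝ := Real.sqrt (1 - Complex.normSq a) with hβ
  have hβ0 : 0 ≤ β := Real.sqrt_nonneg _
  have hβ2 : β ^ 2 = 1 - Complex.normSq a := Real.sq_sqrt (by linarith)
  set u' : Fin n → ℂ := ((1 + β : ℝ) : ℂ) • φ - (starRingEnd ℂ a) • ψ with hu'
  set v' : Fin n → ℂ := ((1 + β : ℝ) : ℂ) • ψ - a • φ with hv'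
  have hu : star u' ⬝ᵥ u' = ((2 * β ^ 2 * (1 + β) : ℝ) : ℂ) := by
    rw [hu']
    have hb' : β ^ 2 = 1 - Complex.normSq (star φ ⬝ᵥ ψ) := by rw [← ha]; exact hβ2
    have := hs_norm φ ψ hφ1 hψ1 β hb'
    rw [← ha] at this
    exact this
  have hv : star v' ⬝ᵥ v' = ((2 * β ^ 2 * (1 + β) : ℝ) : ℂ) := by
    rw [hv']
    have hb' : β ^ 2 = 1 - Complex.normSq (star ψ ⬝ᵥ φ) := by
      rw [hs_dot_conj φ ψ, ← ha, Complex.normSq_conj]; exact hβ2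
    have := hs_norm ψ φ hψ1 hφ1 β hb'
    rw [hs_dot_conj φ ψ, ← ha, Complex.conj_conj] at this
    exact this
  rcases eq_or_lt_of_le hβ0 with hb0 | hb0
  · -- degenerate case: β = 0, the two pure states coincide
    have hz : star u' ⬝ᵥ u' = 0 := by
      rw [hu, ← hb0]; norm_num
    have hre0 : ∑ i, Complex.normSq (u' i) = 0 := by
      have h := congrArg Complex.re hz
      simpa [dotProduct, Complex.re_sum, mul_comm, Complex.mul_conj] using h
    have hu0 : u' = 0 := by
      funext i
      have hterm := (Finset.sum_eq_zero_iff_of_nonneg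
        (fun j _ => Complex.normSq_nonneg (u' j))).mp hre0 i (Finset.mem_univ i)
      exact Complex.normSq_eq_zero.mp hterm
    have hφψ : φ = (starRingEnd ℂ a) • ψ := by
      have h1 : ((1 + β : ℝ) : ℂ) • φ - (starRingEnd ℂ a) • ψ = 0 := by rw [← hu']; exact hu0
      rw [← hb0] at h1
      simpa [sub_eq_zero] using h1
    have hna : a * starRingEnd ℂ a = 1 := by
      rw [Complex.mul_conj]
      have : Complex.normSq a = 1 := by
        have := hβ2; rw [← hb0] at this; linarith
      rw [this]; norm_num
    have houter : outer φ = outer ψ := by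
      ext i j
      rw [hφψ]
      simp only [outer, vecMulVec_apply, Pi.star_apply, Pi.smul_apply, smul_eq_mul,
        star_mul', Complex.star_def, Complex.conj_conj]
      linear_combination (ψ i * starRingEnd ℂ (ψ j)) * hna
    rw [houter]
    simp
  · -- main case: β > 0
    have hb0' : 0 < β := hb0
    -- the two normalisation constants
    have hpc : (2 * β ^ 2 * (1 + β)) = β * (2 * β * (1 + β)) := by ring
    have hcpos : 0 < 2 * β * (1 + β) := by positivity
    -- matrix identity
    have hident : outer u' - outer v' = ((2 * β * (1 + β) : ℝ) : ℂ) • (outer φ - outer ψ) := by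
      rw [hu', hv']; exact hs_ident φ ψ a β hβ2
    -- channel linearity
    have hchan : channel K (outer u') - channel K (outer v')
        = ((2 * β * (1 + β) : ℝ) : ℂ) • (channel K (outer φ) - channel K (outer ψ)) := by
      rw [← hs_channel_sub, hident, hs_channel_smul, hs_channel_sub]
    -- Kraus sums
    have hpa : ∑ i, star (K i *ᵥ u') ⬝ᵥ (K i *ᵥ u') = ((2 * β ^ 2 * (1 + β) : ℝ) : ℂ) := by
      rw [hs_kraus K hK u', hu]
    have hpb : ∑ i, star (K i *ᵥ v') ⬝ᵥ (K i *ᵥ v') = ((2 * β ^ 2 * (1 + β) : ℝ) : ℂ) := by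
      rw [hs_kraus K hK v', hv]
    have hkey := hs_key (fun i => K i *ᵥ u') (fun i => K i *ᵥ v') _ _ hpa hpb
    rw [← hs_channel_outer, ← hs_channel_outer, hchan] at hkey
    -- extract the scalar
    have hsmul : ((((2 * β * (1 + β) : ℝ) : ℂ) • (channel K (outer φ) - channel K (outer ψ))) *
        (((2 * β * (1 + β) : ℝ) : ℂ) • (channel K (outer φ) - channel K (outer ψ)))).trace.re
        = (2 * β * (1 + β)) * ((2 * β * (1 + β)) *
          (((channel K (outer φ) - channel K (outer ψ)) *
            (channel K (outer φ) - channel K (outer ψ))).trace).re) := by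
      rw [Matrix.smul_mul, Matrix.mul_smul, Matrix.trace_smul, Matrix.trace_smul]
      simp [Complex.re_ofReal_mul]
    rw [hsmul] at hkey
    rw [hRHS]
    have h2 : 2 - 2 * Complex.normSq a = 2 * β ^ 2 := by linarith
    rw [h2]
    have hring : (2 * β ^ 2 * (1 + β)) ^ 2 + (2 * β ^ 2 * (1 + β)) ^ 2
        = 2 * β * (1 + β) * (2 * β * (1 + β) * (2 * β ^ 2)) := by ring
    rw [hring] at hkey
    exact le_of_mul_le_mul_left (le_of_mul_le_mul_left hkey hcpos) hcpos
end
end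

section
/- For all probability weights p_j (p_j ≥ 0, ∑_j p_j = 1) and density matrices ρ_j on ℂ^n (j ∈ Fin k), the quadratic Holevo quantity equals a sum of pairwise Hilbert–Schmidt distances: S_Q(∑_j p_j ρ_j) − ∑_j p_j S_Q(ρ_j) = ∑_{j < j'} p_j p_{j'} Re Tr[(ρ_j − ρ_{j'})²]. -/
open scoped Kronecker
open Finset Matrix
open scoped ComplexOrder

noncomputable section

/-- the quadratic Holevo quantity equals a sum of pairwise
Hilbert–Schmidt distances. -/
theorem quadratic_holevo_eq_pairwise_hs
    (n k : ℕ) (p : Fin k → ℝ) (ρ : Fin k → Matrix (Fin n) (Fin n) ℂ)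
    (hp : ∀ j, 0 ≤ p j) (hps : ∑ j, p j = 1) (hρ : ∀ j, IsDensity (ρ j)) :
    SQ (∑ j, (p j : ℂ) • ρ j) - ∑ j, p j * SQ (ρ j) =
      ∑ j, ∑ j' ∈ Finset.Ioi j,
        p j * p j' * (((ρ j - ρ j') * (ρ j - ρ j')).trace).re := by
  set F : Fin k → Fin k → ℝ := fun a b => ((ρ a * ρ b).trace).re with hFdef
  have hFsymm : ∀ a b, F a b = F b a := by
    intro a b; simp only [hFdef]; rw [Matrix.trace_mul_comm]
  set h : Fin k → Fin k → ℝ := fun a b => p a * p b * (F a a - F a b) with hhdef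
  have step1 : SQ (∑ j, (p j : ℂ) • ρ j) = 1 - ∑ a, ∑ b, p a * p b * F a b := by
    simp only [SQ, Finset.sum_mul_sum, smul_mul_assoc, mul_smul_comm, Matrix.trace_sum,
      Matrix.trace_smul, smul_smul, smul_eq_mul, ← Complex.ofReal_mul, Complex.re_sum,
      Complex.re_ofReal_mul, hFdef]
    congr 1
    rw [Finset.sum_comm]
    refine Finset.sum_congr rfl fun a _ => Finset.sum_congr rfl fun b _ => ?_
    rw [Matrix.trace_mul_comm]
  have step2 : ∀ j, SQ (ρ j) = 1 - F j j := fun j => rfl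
  have step3 : ∀ a b, (((ρ a - ρ b) * (ρ a - ρ b)).trace).re
      = F a a - F a b - F b a + F b b := by
    intro a b
    simp only [sub_mul, mul_sub, Matrix.trace_sub, Complex.sub_re, Complex.add_re, hFdef]
    ring
  -- rewrite the RHS pairwise sum
  have rhs_eq : ∑ a, ∑ b ∈ Finset.Ioi a,
      p a * p b * (((ρ a - ρ b) * (ρ a - ρ b)).trace).re
      = ∑ a, ∑ b ∈ Finset.Ioi a, (h a b + h b a) := by
    refine Finset.sum_congr rfl fun a _ => Finset.sum_congr rfl fun b _ => ?_
    rw [step3]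
    simp only [hhdef]
    rw [hFsymm b a]
    ring
  have key : ∑ a, ∑ b ∈ Finset.Ioi a, (h a b + h b a) = ∑ a, ∑ b, h a b := by
    have := Finset.sum_sum_Ioi_add_eq_sum_sum_off_diag (fun a b => h b a)
    rw [this]
    refine Finset.sum_congr rfl fun a _ => ?_
    refine Finset.sum_subset (Finset.subset_univ _) fun x _ hx => ?_
    simp only [Finset.mem_compl, Finset.mem_singleton, not_not] at hx
    subst hx
    simp [hhdef]
  rw [rhs_eq, key, step1]
  simp only [step2]
  have expand : ∑ j, p j * (1 - F j j) = 1 - ∑ j, p j * F j j := by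
    simp only [mul_sub, mul_one, Finset.sum_sub_distrib, hps]
  rw [expand]
  have diagexp : ∑ j, p j * F j j = ∑ a, ∑ b, p a * p b * F a a := by
    refine Finset.sum_congr rfl fun a _ => ?_
    calc p a * F a a = (p a * F a a) * ∑ b, p b := by rw [hps, mul_one]
      _ = ∑ b, p a * p b * F a a := by rw [Finset.mul_sum]; exact Finset.sum_congr rfl fun b _ => by ring
  have hsplit : ∑ a, ∑ b, h a b
      = (∑ a, ∑ b, p a * p b * F a a) - ∑ a, ∑ b, p a * p b * F a b := by
    simp only [hhdef, mul_sub, Finset.sum_sub_distrib]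
  rw [hsplit, ← diagexp]
  ring
end
end

section
/- Generalized additivity implies additivity: let S be an entropy family, and suppose that for all m, n, every orthonormal basis {w_j}_{j∈Fin m} of ℂ^m, all probability weights p_j (p_j ≥ 0, ∑_j p_j = 1) and all density matrices ρ_j on ℂ^n, one has S(∑_j p_j (w_j w_jᴴ) ⊗ ρ_j) = S(∑_j p_j w_j w_jᴴ) + ∑_j p_j S(ρ_j). Then S is additive: for all density matrices ρ_a on ℂ^m and ρ_b on ℂ^n, S(ρ_a ⊗ ρ_b) = S(ρ_a) + S(ρ_b), where ⊗ is the Kronecker product. -/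
open scoped Kronecker
open Finset Matrix
open scoped ComplexOrder

noncomputable section

lemma decomp_aux {m : ℕ} (ρa : Matrix (Fin m) (Fin m) ℂ) (hH : ρa.IsHermitian) :
    ∑ j, ((hH.eigenvalues j : ℂ)) • outer (fun x => hH.eigenvectorBasis j x) = ρa := by
  conv_rhs => rw [hH.spectral_theorem]
  ext i i'
  simp only [Matrix.sum_apply, Matrix.smul_apply, outer, Matrix.vecMulVec_apply,
    Matrix.mul_apply, Matrix.diagonal_apply, Matrix.star_apply, smul_eq_mul,
    mul_ite, mul_zero, Finset.sum_ite_eq', Finset.mem_univ, if_true]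
  refine Finset.sum_congr rfl fun j _ => ?_
  simp [Matrix.IsHermitian.eigenvectorUnitary_apply, Pi.star_apply, Function.comp]
  ring

lemma sum_kronecker_aux {m n k : ℕ} (f : Fin k → Matrix (Fin m) (Fin m) ℂ)
    (B : Matrix (Fin n) (Fin n) ℂ) :
    (∑ j, f j) ⊗ₖ B = ∑ j, (f j) ⊗ₖ B := by
  ext ⟨i, x⟩ ⟨i', x'⟩
  simp [Matrix.kroneckerMap_apply, Matrix.sum_apply, Finset.sum_mul]

/-- generalized additivity implies additivity. -/
theorem generalized_additivity_implies_additivity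
    (S : EntropyFamily)
    (hga : ∀ (m n : ℕ) (w : Fin m → Fin m → ℂ),
      (∀ i i', ∑ x, star (w i x) * w i' x = if i = i' then 1 else 0) →
      ∀ (p : Fin m → ℝ) (ρ : Fin m → Matrix (Fin n) (Fin n) ℂ),
        (∀ j, 0 ≤ p j) → ∑ j, p j = 1 → (∀ j, IsDensity (ρ j)) →
        S (Fin m × Fin n) (∑ j, (p j : ℂ) • (outer (w j) ⊗ₖ ρ j)) =
          S (Fin m) (∑ j, (p j : ℂ) • outer (w j)) + ∑ j, p j * S (Fin n) (ρ j))
    (m n : ℕ) (ρa : Matrix (Fin m) (Fin m) ℂ) (ρb : Matrix (Fin n) (Fin n) ℂ)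
    (ha : IsDensity ρa) (hb : IsDensity ρb) :
    S (Fin m × Fin n) (ρa ⊗ₖ ρb) = S (Fin m) ρa + S (Fin n) ρb := by
    classical
  have hH : ρa.IsHermitian := ha.1.1
  set w : Fin m → Fin m → ℂ := fun j x => hH.eigenvectorBasis j x with hw
  set p : Fin m → ℝ := fun j => hH.eigenvalues j with hp
  have horth : ∀ i i', ∑ x, star (w i x) * w i' x = if i = i' then 1 else 0 := by
    intro i i'
    have := orthonormal_iff_ite.mp hH.eigenvectorBasis.orthonormal i i'
    simpa [PiLp.inner_apply, RCLike.inner_apply, hw, mul_comm] using this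
  have hdec : ∑ j, (p j : ℂ) • outer (w j) = ρa := decomp_aux ρa hH
  have hpnn : ∀ j, 0 ≤ p j := fun j => ha.1.eigenvalues_nonneg j
  have htr : ∀ j, (outer (w j)).trace = 1 := by
    intro j
    have := horth j j
    simp only [if_true] at this
    simpa [outer, Matrix.trace, Matrix.diag, Matrix.vecMulVec_apply, mul_comm] using this
  have hsum : ∑ j, p j = 1 := by
    have h1 : ((∑ j, p j : ℝ) : ℂ) = 1 := by
      have := congrArg Matrix.trace hdec
      rw [ha.2] at this
      rw [← this]
      push_cast
      simp [Matrix.trace_sum, Matrix.trace_smul, htr]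
    exact_mod_cast h1
  have key := hga m n w horth p (fun _ => ρb) hpnn hsum (fun _ => hb)
  have harg : ∑ j, (p j : ℂ) • (outer (w j) ⊗ₖ ρb) = ρa ⊗ₖ ρb := by
    rw [← hdec, sum_kronecker_aux]
    refine Finset.sum_congr rfl fun j _ => ?_
    rw [Matrix.smul_kronecker]
  rw [harg, hdec] at key
  rw [key, ← Finset.sum_mul, hsum, one_mul]
end
end
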